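/- arXiv:2103.03914 — 15 statements merged into one kernel-verified Lean document; each statement's English description precedes it below -/
import Mathlib

section
/- There is an absolute constant C > 0 such that the following holds. Let γ ≥ 1 be an integer, let G be a weakly γ-closed finite simple graph, let I ⊆ V(G) be an independent set with k := |V(G)| − |I| ≥ 1, and let t ≥ 1 be an integer. If for every vertex v ∈ I there are at most t vertices v' ∈ I \ {v} with N(v') = N(v), then |I| ≤ C · t · 3^{γ/3} · k^{2γ+3}. -/
open Set

/-- `σ` is a closure ordering witnessing that `G` is weakly `γ`-closed: `σ` is an
injective labelling of the vertices, and for every vertex `v` and every later vertex `w`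
distinct from and nonadjacent to `v`, the vertices `v` and `w` have fewer than `γ` common
neighbors in the subgraph induced by the vertices from `v` onwards. -/
def IsClosureOrdering {V : Type*} (G : SimpleGraph V) (gam : ℕ) (σ : V → ℕ) : Prop :=
  Function.Injective σ ∧
    ∀ v w : V, σ v ≤ σ w → w ≠ v → ¬ G.Adj v w →
      {u : V | G.Adj v u ∧ G.Adj w u ∧ σ v ≤ σ u}.ncard < gam

/-- A graph is weakly `γ`-closed if it admits a closure ordering. -/
def WeaklyClosed {V : Type*} (G : SimpleGraph V) (gam : ℕ) : Prop :=
  ∃ σ : V → ℕ, IsClosureOrdering G gam σ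

/-- `Q(v)`: the neighbors of `v` occurring after `v` in the ordering `σ`. -/
def Qset {V : Type*} (G : SimpleGraph V) (σ : V → ℕ) (v : V) : Set V :=
  {u : V | G.Adj v u ∧ σ v < σ u}

/-- `P(v)`: the neighbors of `v` occurring before `v` in the ordering `σ`. -/
def Pset {V : Type*} (G : SimpleGraph V) (σ : V → ℕ) (v : V) : Set V :=
  {u : V | G.Adj v u ∧ σ u < σ v}

/-- A set of pairwise nonadjacent vertices. -/
def IsIndepSet {V : Type*} (G : SimpleGraph V) (s : Set V) : Prop :=
  s.Pairwise (fun u v => ¬ G.Adj u v)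

/-- Key VC-dimension bound: a set shattered by the neighborhoods of vertices of an
independent set in a weakly `γ`-closed graph has at most `2γ+1` elements. -/
lemma key_vc {V : Type} [Fintype V] [DecidableEq V] {G : SimpleGraph V} [DecidableRel G.Adj]
    {gam : ℕ} (hgam : 1 ≤ gam) {σ : V → ℕ} (hinj : Function.Injective σ)
    (hclo : ∀ v w : V, σ v ≤ σ w → w ≠ v → ¬ G.Adj v w →
      {u : V | G.Adj v u ∧ G.Adj w u ∧ σ v ≤ σ u}.ncard < gam)
    {I : Set V} (hI : IsIndepSet G I) {s : Finset V}
    (hsh : ∀ B ⊆ s, ∃ v ∈ I, s ∩ G.neighborFinset v = B) :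
    s.card ≤ 2 * gam + 1 := by
  by_contra hbig
  push_neg at hbig
  have hsne : s.Nonempty := by
    rw [← Finset.card_pos]; omega
  have hsh' : ∀ B : Finset V, ∃ v : V, B ⊆ s → (v ∈ I ∧ s ∩ G.neighborFinset v = B) := by
    intro B
    by_cases hB : B ⊆ s
    · obtain ⟨v, hv1, hv2⟩ := hsh B hB
      exact ⟨v, fun _ => ⟨hv1, hv2⟩⟩
    · exact ⟨hsne.choose, fun h => absurd h hB⟩
  choose w hw using hsh'
  have hwI : ∀ B ⊆ s, w B ∈ I := fun B hB => (hw B hB).1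
  have hwt : ∀ B ⊆ s, s ∩ G.neighborFinset (w B) = B := fun B hB => (hw B hB).2
  have hadj : ∀ B ⊆ s, ∀ a ∈ s, (G.Adj (w B) a ↔ a ∈ B) := by
    intro B hB a ha
    constructor
    · intro h
      rw [← hwt B hB]
      exact Finset.mem_inter.2 ⟨ha, (SimpleGraph.mem_neighborFinset _ _ _).2 h⟩
    · intro h
      rw [← hwt B hB] at h
      exact (SimpleGraph.mem_neighborFinset _ _ _).1 (Finset.mem_inter.1 h).2
  have hsnotI : ∀ a ∈ s, a ∉ I := by
    intro a ha haI
    have h1 : ({a} : Finset V) ⊆ s := Finset.singleton_subset_iff.2 ha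
    have hadj1 : G.Adj (w {a}) a := (hadj _ h1 a ha).2 (Finset.mem_singleton_self a)
    have hne : w {a} ≠ a := fun h => G.irrefl (h ▸ hadj1)
    exact hI (hwI _ h1) haI hne hadj1
  have hwne : ∀ B ⊆ s, ∀ a ∈ s, w B ≠ a := by
    intro B hB a ha h
    exact hsnotI a ha (h ▸ hwI B hB)
  have hnadj : ∀ B ⊆ s, ∀ a ∈ s, a ∉ B → ¬ G.Adj (w B) a :=
    fun B hB a ha haB h => haB ((hadj B hB a ha).1 h)
  obtain ⟨a₁, ha₁s, ha₁min⟩ := s.exists_min_image σ hsne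
  -- Step 1: `a₁` has fewer than `gam` neighbors inside `s`.
  set B₁ : Finset V := s.filter (fun u => G.Adj a₁ u) with hB₁def
  have hB₁s : B₁ ⊆ s := Finset.filter_subset _ _
  have ha₁B₁ : a₁ ∉ B₁ := fun h => G.irrefl (Finset.mem_filter.1 h).2
  have hw₁ : ¬ G.Adj (w B₁) a₁ := hnadj B₁ hB₁s a₁ ha₁s ha₁B₁
  have hw₁ne : w B₁ ≠ a₁ := hwne B₁ hB₁s a₁ ha₁s
  have hB₁mem : ∀ u ∈ B₁, G.Adj a₁ u ∧ G.Adj (w B₁) u ∧ σ a₁ ≤ σ u := by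
    intro u hu
    have hus : u ∈ s := hB₁s hu
    exact ⟨(Finset.mem_filter.1 hu).2, (hadj B₁ hB₁s u hus).2 hu, ha₁min u hus⟩
  have hB₁γ : B₁.card < gam := by
    rcases le_total (σ a₁) (σ (w B₁)) with hle | hle
    · have hcl := hclo a₁ (w B₁) hle hw₁ne (fun h => hw₁ h.symm)
      have hsub : (↑B₁ : Set V) ⊆ {u | G.Adj a₁ u ∧ G.Adj (w B₁) u ∧ σ a₁ ≤ σ u} := by
        intro u hu
        exact hB₁mem u hu
      calc B₁.card = (↑B₁ : Set V).ncard := (Set.ncard_coe_finset _).symm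
        _ ≤ _ := Set.ncard_le_ncard hsub (Set.toFinite _)
        _ < gam := hcl
    · have hcl := hclo (w B₁) a₁ hle hw₁ne.symm hw₁
      have hsub : (↑B₁ : Set V) ⊆ {u | G.Adj (w B₁) u ∧ G.Adj a₁ u ∧ σ (w B₁) ≤ σ u} := by
        intro u hu
        obtain ⟨h1, h2, h3⟩ := hB₁mem u hu
        exact ⟨h2, h1, le_trans hle h3⟩
      calc B₁.card = (↑B₁ : Set V).ncard := (Set.ncard_coe_finset _).symm
        _ ≤ _ := Set.ncard_le_ncard hsub (Set.toFinite _)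
        _ < gam := hcl
  -- Step 2: pick `X ⊆ s` of size `gam`, disjoint from `{a₁} ∪ N(a₁)`.
  have hins : (insert a₁ B₁).card ≤ gam := by
    have := Finset.card_insert_le a₁ B₁
    omega
  have hA'card : gam + 2 ≤ (s \ insert a₁ B₁).card := by
    have h1 := Finset.le_card_sdiff (insert a₁ B₁) s
    omega
  obtain ⟨X, hXA', hXcard⟩ := Finset.exists_subset_card_eq (s := s \ insert a₁ B₁) (n := gam) (by omega)
  have hXs : X ⊆ s := hXA'.trans (Finset.sdiff_subset)
  have hXprop : ∀ x ∈ X, x ∈ s ∧ x ≠ a₁ ∧ ¬ G.Adj a₁ x := by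
    intro x hx
    obtain ⟨hxs, hxn⟩ := Finset.mem_sdiff.1 (hXA' hx)
    refine ⟨hxs, ?_, ?_⟩
    · intro h; exact hxn (by rw [h]; exact Finset.mem_insert_self _ _)
    · intro h; exact hxn (Finset.mem_insert_of_mem (Finset.mem_filter.2 ⟨hxs, h⟩))
  obtain ⟨x₀, hx₀X⟩ : X.Nonempty := Finset.card_pos.1 (by omega)
  obtain ⟨hx₀s, hx₀ne, hx₀nadj⟩ := hXprop x₀ hx₀X
  have ha₁X : a₁ ∉ X := fun h => (hXprop a₁ h).2.1 rfl
  set K : Finset V := insert a₁ X with hKdef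
  have hKs : K ⊆ s := Finset.insert_subset ha₁s hXs
  have hKcard : K.card = gam + 1 := by
    rw [hKdef, Finset.card_insert_of_notMem ha₁X, hXcard]
  set Cset : Set V := {u : V | G.Adj a₁ u ∧ G.Adj x₀ u ∧ σ a₁ ≤ σ u} with hCdef
  have hClt : Cset.ncard < gam := hclo a₁ x₀ (ha₁min x₀ hx₀s) hx₀ne hx₀nadj
  set Z : Finset V := s \ K with hZdef
  have hZcard : gam + 1 ≤ Z.card := by
    have h1 : Z.card = s.card - K.card := by rw [hZdef]; exact Finset.card_sdiff_of_subset hKs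
    omega
  -- generic facts about witnesses of supersets of `K`
  have hwit : ∀ B ⊆ s, K ⊆ B → (G.Adj (w B) a₁ ∧ ∀ x ∈ X, G.Adj (w B) x) := by
    intro B hB hKB
    exact ⟨(hadj B hB a₁ ha₁s).2 (hKB (Finset.mem_insert_self _ _)),
      fun x hx => (hadj B hB x (hXs hx)).2 (hKB (Finset.mem_insert_of_mem hx))⟩
  have hpair : ∀ B ⊆ s, K ⊆ B → ∀ B' ⊆ s, K ⊆ B' → w B ≠ w B' →
      σ (w B) ≤ σ (w B') → σ (w B) < σ a₁ → False := by
    intro B hB hKB B' hB' hKB' hne hle h1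
    have hna : ¬ G.Adj (w B) (w B') := hI (hwI B hB) (hwI B' hB') hne
    have hcl := hclo (w B) (w B') hle hne.symm hna
    have hsub : (↑K : Set V) ⊆ {u | G.Adj (w B) u ∧ G.Adj (w B') u ∧ σ (w B) ≤ σ u} := by
      intro u hu
      rw [Finset.mem_coe, hKdef, Finset.mem_insert] at hu
      rcases hu with rfl | hu
      · exact ⟨(hwit B hB hKB).1, (hwit B' hB' hKB').1, le_of_lt h1⟩
      · exact ⟨(hwit B hB hKB).2 u hu, (hwit B' hB' hKB').2 u hu,
          le_trans (le_of_lt h1) (ha₁min u (hXs hu))⟩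
    have hge : gam + 1 ≤ {u | G.Adj (w B) u ∧ G.Adj (w B') u ∧ σ (w B) ≤ σ u}.ncard := by
      calc gam + 1 = K.card := hKcard.symm
        _ = (↑K : Set V).ncard := (Set.ncard_coe_finset _).symm
        _ ≤ _ := Set.ncard_le_ncard hsub (Set.toFinite _)
    omega
  have hearly : ∀ B ⊆ s, K ⊆ B → ∀ B' ⊆ s, K ⊆ B' → w B ≠ w B' →
      σ (w B) < σ a₁ → σ (w B') < σ a₁ → False := by
    intro B hB hKB B' hB' hKB' hne h1 h2
    rcases le_total (σ (w B)) (σ (w B')) with h | h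
    · exact hpair B hB hKB B' hB' hKB' hne h h1
    · exact hpair B' hB' hKB' B hB hKB hne.symm h h2
  have hlate : ∀ B ⊆ s, K ⊆ B → σ a₁ < σ (w B) → w B ∈ Cset := by
    intro B hB hKB hlt
    exact ⟨((hwit B hB hKB).1).symm, ((hwit B hB hKB).2 x₀ hx₀X).symm, le_of_lt hlt⟩
  -- the family of witnesses
  set T : V → Finset V := fun z => insert z K with hTdef
  have hTs : ∀ z ∈ Z, T z ⊆ s := fun z hz =>
    Finset.insert_subset ((Finset.mem_sdiff.1 hz).1) hKs
  have hKT : ∀ z, K ⊆ T z := fun z => Finset.subset_insert _ _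
  have hinj2 : ∀ z ∈ Z, ∀ z' ∈ Z, w (T z) = w (T z') → z = z' := by
    intro z hz z' hz' heq
    have hTT : T z = T z' := by
      rw [← hwt (T z) (hTs z hz), ← hwt (T z') (hTs z' hz'), heq]
    have hzz : z ∈ T z' := by rw [← hTT]; exact Finset.mem_insert_self z K
    rcases Finset.mem_insert.1 hzz with h | h
    · exact h
    · exact absurd h (Finset.mem_sdiff.1 hz).2
  have hw₀ : ∀ z ∈ Z, w K ≠ w (T z) := by
    intro z hz heq
    have hTT : K = T z := by
      rw [← hwt K hKs, ← hwt (T z) (hTs z hz), heq]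
    have : z ∈ K := by rw [hTT]; exact Finset.mem_insert_self z K
    exact (Finset.mem_sdiff.1 hz).2 this
  set W : Finset V := insert (w K) (Z.image (fun z => w (T z))) with hWdef
  have hWcard : gam + 2 ≤ W.card := by
    have himg : (Z.image (fun z => w (T z))).card = Z.card :=
      Finset.card_image_of_injOn (fun z hz z' hz' => hinj2 z hz z' hz')
    rw [hWdef, Finset.card_insert_of_notMem]
    · omega
    · intro h
      obtain ⟨z, hz, heq⟩ := Finset.mem_image.1 h
      exact hw₀ z hz heq.symm
  have hWrep : ∀ v ∈ W, ∃ B, B ⊆ s ∧ K ⊆ B ∧ v = w B := by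
    intro v hv
    rw [hWdef, Finset.mem_insert] at hv
    rcases hv with rfl | hv
    · exact ⟨K, hKs, Finset.Subset.refl K, rfl⟩
    · obtain ⟨z, hz, rfl⟩ := Finset.mem_image.1 hv
      exact ⟨T z, hTs z hz, hKT z, rfl⟩
  have hWσ : ∀ v ∈ W, σ v ≠ σ a₁ := by
    intro v hv h
    obtain ⟨B, hB, _, rfl⟩ := hWrep v hv
    exact hwne B hB a₁ ha₁s (hinj h)
  set E := W.filter (fun v => σ v < σ a₁) with hEdef
  set L := W.filter (fun v => σ a₁ < σ v) with hLdef
  have hWEL : W ⊆ E ∪ L := by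
    intro v hv
    rcases lt_trichotomy (σ v) (σ a₁) with h | h | h
    · exact Finset.mem_union_left _ (Finset.mem_filter.2 ⟨hv, h⟩)
    · exact absurd h (hWσ v hv)
    · exact Finset.mem_union_right _ (Finset.mem_filter.2 ⟨hv, h⟩)
  have hE : E.card ≤ 1 := by
    rw [Finset.card_le_one]
    intro a ha b hb
    by_contra hab
    obtain ⟨ha1, ha2⟩ := Finset.mem_filter.1 ha
    obtain ⟨hb1, hb2⟩ := Finset.mem_filter.1 hb
    obtain ⟨B, hB, hKB, rfl⟩ := hWrep a ha1
    obtain ⟨B', hB', hKB', rfl⟩ := hWrep b hb1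
    exact hearly B hB hKB B' hB' hKB' hab ha2 hb2
  have hL : L.card ≤ gam - 1 := by
    have hsub : (↑L : Set V) ⊆ Cset := by
      intro v hv
      obtain ⟨hv1, hv2⟩ := Finset.mem_filter.1 (Finset.mem_coe.1 hv)
      obtain ⟨B, hB, hKB, rfl⟩ := hWrep v hv1
      exact hlate B hB hKB hv2
    have h1 : L.card ≤ Cset.ncard := by
      rw [← Set.ncard_coe_finset]
      exact Set.ncard_le_ncard hsub (Set.toFinite _)
    omega
  have hfin : W.card ≤ E.card + L.card :=
    le_trans (Finset.card_le_card hWEL) (Finset.card_union_le _ _)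
  omega

theorem stmt1 : ∃ C : ℝ, 0 < C ∧
    ∀ (V : Type) [Fintype V] (G : SimpleGraph V) (gam : ℕ), 1 ≤ gam →
      WeaklyClosed G gam →
      ∀ I : Set V, IsIndepSet G I →
      ∀ k : ℕ, k = Fintype.card V - I.ncard → 1 ≤ k →
      ∀ t : ℕ, 1 ≤ t →
      (∀ v ∈ I, {v' ∈ I \ {v} | G.neighborSet v' = G.neighborSet v}.ncard ≤ t) →
      (I.ncard : ℝ) ≤ C * (t : ℝ) * (3 : ℝ) ^ ((gam : ℝ) / 3) * (k : ℝ) ^ (2 * gam + 3) := by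
  classical
  refine ⟨12, by norm_num, ?_⟩
  intro V _ G gam hgam hWC I hI k hk hk1 t ht hmult
  obtain ⟨σ, hinj, hclo⟩ := hWC
  -- Finset versions
  set Ifin : Finset V := I.toFinset with hIfin
  have hIfincard : Ifin.card = I.ncard := (Set.ncard_eq_toFinset_card' I).symm
  set F : Finset (Finset V) := Ifin.image (fun v => G.neighborFinset v) with hFdef
  -- fiber bound
  have hfib : ∀ A ∈ F, (Ifin.filter (fun v => G.neighborFinset v = A)).card ≤ t + 1 := by
    intro A hA
    obtain ⟨v₀, hv₀, rfl⟩ := Finset.mem_image.1 hA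
    have hv₀I : v₀ ∈ I := Set.mem_toFinset.1 hv₀
    set D : Set V := {v' ∈ I \ {v₀} | G.neighborSet v' = G.neighborSet v₀} with hDdef
    have hDfin : D.Finite := Set.toFinite D
    have hsub : Ifin.filter (fun v => G.neighborFinset v = G.neighborFinset v₀) ⊆
        insert v₀ hDfin.toFinset := by
      intro v hv
      obtain ⟨hv1, hv2⟩ := Finset.mem_filter.1 hv
      by_cases hvv : v = v₀
      · rw [hvv]; exact Finset.mem_insert_self _ _
      · refine Finset.mem_insert_of_mem (hDfin.mem_toFinset.2 ?_)
        refine ⟨⟨Set.mem_toFinset.1 hv1, hvv⟩, ?_⟩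
        refine Set.ext fun a => ?_
        have h3 := Finset.ext_iff.1 hv2 a
        simpa [SimpleGraph.mem_neighborFinset] using h3
    calc (Ifin.filter (fun v => G.neighborFinset v = G.neighborFinset v₀)).card
        ≤ (insert v₀ hDfin.toFinset).card := Finset.card_le_card hsub
      _ ≤ hDfin.toFinset.card + 1 := Finset.card_insert_le _ _
      _ = D.ncard + 1 := by rw [Set.ncard_eq_toFinset_card _ hDfin]
      _ ≤ t + 1 := by
          have h4 : D.ncard ≤ t := hmult v₀ hv₀I
          omega
  have hcount1 : Ifin.card ≤ (t + 1) * F.card :=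
    Finset.card_le_mul_card_image Ifin (t + 1) hfib
  -- Sauer-Shelah
  have hSS : F.card ≤ F.shatterer.card := Finset.card_le_card_shatterer F
  -- the complement of I
  set Sfin : Finset V := Ifinᶜ with hSdef
  have hSk : Sfin.card = k := by
    rw [hSdef, Finset.card_compl, hIfincard, hk]
  -- members of F avoid I
  have hFsub : ∀ u ∈ F, u ⊆ Sfin := by
    intro u hu
    obtain ⟨v, hv, rfl⟩ := Finset.mem_image.1 hu
    intro a ha
    have hadj : G.Adj v a := (SimpleGraph.mem_neighborFinset _ _ _).1 ha
    rw [hSdef, Finset.mem_compl]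
    intro haI
    have hvI : v ∈ I := Set.mem_toFinset.1 hv
    have haI' : a ∈ I := Set.mem_toFinset.1 haI
    exact hI hvI haI' (fun h => G.irrefl (h ▸ hadj)) hadj
  -- shattered sets are small subsets of Sfin
  have hshsub : F.shatterer ⊆ (Finset.range (2 * gam + 2)).biUnion
      (fun i => Sfin.powersetCard i) := by
    intro s hs
    have hsh : F.Shatters s := Finset.mem_shatterer.1 hs
    have hsS : s ⊆ Sfin := by
      obtain ⟨u, hu, hsu⟩ := hsh.exists_superset
      exact hsu.trans (hFsub u hu)
    have hcard : s.card ≤ 2 * gam + 1 := by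
      refine key_vc hgam hinj hclo hI ?_
      intro B hB
      obtain ⟨u, hu, hBu⟩ := hsh hB
      obtain ⟨v, hv, rfl⟩ := Finset.mem_image.1 hu
      exact ⟨v, Set.mem_toFinset.1 hv, hBu⟩
    refine Finset.mem_biUnion.2 ⟨s.card, Finset.mem_range.2 (by omega), ?_⟩
    exact Finset.mem_powersetCard.2 ⟨hsS, rfl⟩
  have hshcard : F.shatterer.card ≤ (2 * gam + 2) * k ^ (2 * gam + 1) := by
    calc F.shatterer.card ≤ ((Finset.range (2 * gam + 2)).biUnion
          (fun i => Sfin.powersetCard i)).card := Finset.card_le_card hshsub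
      _ ≤ ∑ i ∈ Finset.range (2 * gam + 2), (Sfin.powersetCard i).card :=
          Finset.card_biUnion_le
      _ ≤ ∑ i ∈ Finset.range (2 * gam + 2), k ^ (2 * gam + 1) := by
          refine Finset.sum_le_sum ?_
          intro i hi
          rw [Finset.card_powersetCard, hSk]
          calc k.choose i ≤ k ^ i := Nat.choose_le_pow k i
            _ ≤ k ^ (2 * gam + 1) := by
                have hi' := Finset.mem_range.1 hi
                exact Nat.pow_le_pow_right hk1 (by omega)
      _ = (2 * gam + 2) * k ^ (2 * gam + 1) := by
          rw [Finset.sum_const, Finset.card_range, smul_eq_mul]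
  -- total natural-number bound
  have htotal : I.ncard ≤ (t + 1) * ((2 * gam + 2) * k ^ (2 * gam + 1)) := by
    rw [← hIfincard]
    calc Ifin.card ≤ (t + 1) * F.card := hcount1
      _ ≤ (t + 1) * F.shatterer.card := Nat.mul_le_mul_left _ hSS
      _ ≤ (t + 1) * ((2 * gam + 2) * k ^ (2 * gam + 1)) := Nat.mul_le_mul_left _ hshcard
  -- now real-number arithmetic
  have h3pow : (1 : ℝ) + (gam : ℝ) / 3 ≤ (3 : ℝ) ^ ((gam : ℝ) / 3) := by
    rw [Real.rpow_def_of_pos (by norm_num : (0:ℝ) < 3)]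
    have hlog : (1 : ℝ) ≤ Real.log 3 := by
      rw [Real.le_log_iff_exp_le (by norm_num : (0:ℝ) < 3)]
      have := Real.exp_one_lt_d9
      linarith
    have h1 : Real.log 3 * ((gam : ℝ) / 3) + 1 ≤ Real.exp (Real.log 3 * ((gam : ℝ) / 3)) :=
      Real.add_one_le_exp _
    have h2 : (gam : ℝ) / 3 ≤ Real.log 3 * ((gam : ℝ) / 3) := by
      have hg : (0 : ℝ) ≤ (gam : ℝ) / 3 := by positivity
      nlinarith
    linarith
  have hkR : (1 : ℝ) ≤ (k : ℝ) := by exact_mod_cast hk1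
  have htR : (1 : ℝ) ≤ (t : ℝ) := by exact_mod_cast ht
  have hstep1 : ((I.ncard : ℕ) : ℝ) ≤ ((t : ℝ) + 1) * ((2 * (gam : ℝ) + 2) * (k : ℝ) ^ (2 * gam + 1)) := by
    have := htotal
    have hcast : (((t + 1) * ((2 * gam + 2) * k ^ (2 * gam + 1)) : ℕ) : ℝ)
        = ((t : ℝ) + 1) * ((2 * (gam : ℝ) + 2) * (k : ℝ) ^ (2 * gam + 1)) := by
      push_cast
      ring
    rw [← hcast]
    exact_mod_cast this
  -- combine
  have hpow : (k : ℝ) ^ (2 * gam + 1) ≤ (k : ℝ) ^ (2 * gam + 3) :=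
    pow_le_pow_right₀ hkR (by omega)
  have hgam3 : 2 * (gam : ℝ) + 2 ≤ 6 * ((3 : ℝ) ^ ((gam : ℝ) / 3)) := by
    nlinarith [h3pow]
  have ht2 : (t : ℝ) + 1 ≤ 2 * (t : ℝ) := by linarith
  have hpow1pos : (0 : ℝ) < (k : ℝ) ^ (2 * gam + 1) := by positivity
  have hpow3pos : (0 : ℝ) < (k : ℝ) ^ (2 * gam + 3) := by positivity
  have h3pos : (0 : ℝ) < (3 : ℝ) ^ ((gam : ℝ) / 3) := by positivity
  calc (I.ncard : ℝ) ≤ ((t : ℝ) + 1) * ((2 * (gam : ℝ) + 2) * (k : ℝ) ^ (2 * gam + 1)) := hstep1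
    _ ≤ (2 * (t : ℝ)) * ((6 * ((3 : ℝ) ^ ((gam : ℝ) / 3))) * (k : ℝ) ^ (2 * gam + 3)) := by
        have h1 : (2 * (gam : ℝ) + 2) * (k : ℝ) ^ (2 * gam + 1)
            ≤ (6 * ((3 : ℝ) ^ ((gam : ℝ) / 3))) * (k : ℝ) ^ (2 * gam + 3) := by
          have := mul_le_mul hgam3 hpow (le_of_lt hpow1pos) (by positivity)
          linarith
        have h2 : (0 : ℝ) ≤ (2 * (gam : ℝ) + 2) * (k : ℝ) ^ (2 * gam + 1) := by positivity
        have h3 : (0 : ℝ) < 2 * (t : ℝ) := by linarith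
        nlinarith
    _ = 12 * (t : ℝ) * (3 : ℝ) ^ ((gam : ℝ) / 3) * (k : ℝ) ^ (2 * gam + 3) := by ring
end

section
/- There is an absolute constant C > 0 such that the following holds. Let γ ≥ 1 be an integer, let G be a finite simple graph with a closure ordering witnessing that G is weakly γ-closed, and let I ⊆ V(G) be an independent set with k := |V(G)| − |I| ≥ 1. Then the number of distinct sets in the family {Q(v) : v ∈ I} is at most C · k^γ. -/
open Set

open Finset in
lemma mySumPow (k n : ℕ) (hk : 2 ≤ k) :
    ∑ i ∈ Finset.range (n + 1), k ^ i ≤ 2 * k ^ n := by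
  induction n with
  | zero => simp
  | succ n ih =>
    rw [Finset.sum_range_succ]
    have h1 : 2 * k ^ n ≤ k ^ (n + 1) := by
      rw [pow_succ]
      calc 2 * k ^ n = k ^ n * 2 := Nat.mul_comm _ _
        _ ≤ k ^ n * k := Nat.mul_le_mul_left _ hk
    have := Nat.add_le_add ih (le_refl (k ^ (n + 1)))
    omega

lemma mySumChoose (k gam : ℕ) (hk : 1 ≤ k) (hg : 1 ≤ gam) :
    ∑ i ∈ Finset.range (gam + 1), k.choose i ≤ 2 * k ^ gam := by
  rcases eq_or_lt_of_le hk with h1 | h2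
  · subst h1
    have h2 : Finset.range 2 ⊆ Finset.range (gam + 1) := Finset.range_subset_range.2 (by omega)
    have : ∑ i ∈ Finset.range (gam + 1), Nat.choose 1 i = ∑ i ∈ Finset.range 2, Nat.choose 1 i := by
      refine (Finset.sum_subset h2 ?_).symm
      intro i _ hi
      exact Nat.choose_eq_zero_of_lt (by simpa using hi)
    rw [this]; simp [Finset.sum_range_succ]
  · calc ∑ i ∈ Finset.range (gam + 1), k.choose i
        ≤ ∑ i ∈ Finset.range (gam + 1), k ^ i :=
          Finset.sum_le_sum fun i _ => Nat.choose_le_pow k i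
      _ ≤ 2 * k ^ gam := mySumPow k gam h2

open Finset in
lemma myCombo {V : Type} [DecidableEq V] (gam : ℕ) (S : Finset V)
    (F : Finset (Finset V)) (hsub : ∀ A ∈ F, A ⊆ S)
    (hpair : ∀ A ∈ F, ∀ B ∈ F, A ≠ B → (A ∩ B).card < gam) :
    F.card ≤ ∑ i ∈ Finset.range (gam + 1), S.card.choose i := by
  have hex : ∀ A : Finset V, ∃ t, t ⊆ A ∧ t.card = min A.card gam :=
    fun A => Finset.exists_subset_card_eq (min_le_left _ _)
  choose f hf hcard using hex
  have hinj : Set.InjOn f F := by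
    intro A hA B hB hAB
    by_contra hne
    have hiAB : f A ⊆ A ∩ B := by
      intro x hx
      exact Finset.mem_inter.2 ⟨hf A hx, hf B (hAB ▸ hx)⟩
    have hlt : (A ∩ B).card < gam := hpair A hA B hB hne
    have h1 : min A.card gam ≤ (A ∩ B).card := hcard A ▸ Finset.card_le_card hiAB
    have h2 : min B.card gam ≤ (A ∩ B).card := by
      rw [← hcard B, ← hAB]
      exact Finset.card_le_card hiAB
    have hAc : A.card ≤ (A ∩ B).card := by
      rcases min_cases A.card gam with ⟨h, _⟩ | ⟨h, hlt'⟩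
      · omega
      · omega
    have hBc : B.card ≤ (A ∩ B).card := by
      rcases min_cases B.card gam with ⟨h, _⟩ | ⟨h, hlt'⟩
      · omega
      · omega
    have hA' : A ∩ B = A := Finset.eq_of_subset_of_card_le Finset.inter_subset_left hAc
    have hB' : A ∩ B = B := Finset.eq_of_subset_of_card_le Finset.inter_subset_right hBc
    exact hne (hA' ▸ hB')
  have hmaps : ∀ A ∈ F, f A ∈ S.powerset.filter (fun t => t.card ≤ gam) := by
    intro A hA
    rw [Finset.mem_filter, Finset.mem_powerset]
    exact ⟨(hf A).trans (hsub A hA), by rw [hcard A]; exact min_le_right _ _⟩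
  calc F.card ≤ (S.powerset.filter (fun t => t.card ≤ gam)).card :=
        Finset.card_le_card_of_injOn f hmaps hinj
    _ ≤ ((Finset.range (gam + 1)).biUnion (fun i => S.powersetCard i)).card := by
        apply Finset.card_le_card
        intro t ht
        rw [Finset.mem_filter, Finset.mem_powerset] at ht
        rw [Finset.mem_biUnion]
        exact ⟨t.card, Finset.mem_range.2 (by omega), Finset.mem_powersetCard.2 ⟨ht.1, rfl⟩⟩
    _ ≤ ∑ i ∈ Finset.range (gam + 1), (S.powersetCard i).card := Finset.card_biUnion_le
    _ = ∑ i ∈ Finset.range (gam + 1), S.card.choose i := by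
        simp [Finset.card_powersetCard]

theorem stmt2 : ∃ C : ℝ, 0 < C ∧
    ∀ (V : Type) [Fintype V] (G : SimpleGraph V) (gam : ℕ), 1 ≤ gam →
      ∀ σ : V → ℕ, IsClosureOrdering G gam σ →
      ∀ I : Set V, IsIndepSet G I →
      ∀ k : ℕ, k = Fintype.card V - I.ncard → 1 ≤ k →
      (((Qset G σ) '' I).ncard : ℝ) ≤ C * (k : ℝ) ^ gam := by
  refine ⟨2, by norm_num, ?_⟩
  intro V _ G gam hgam σ hσ I hI k hk hk1
  classical
  obtain ⟨hinj, hclo⟩ := hσ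
  set F : Set (Set V) := Qset G σ '' I with hF
  have hFfin : F.Finite := Set.toFinite _
  set g : Set V → Finset V := fun s => s.toFinite.toFinset with hg
  have hginj : Function.Injective g := by
    intro s t h
    have := congrArg (fun f : Finset V => (f : Set V)) h
    simpa [hg, Set.Finite.coe_toFinset] using this
  set S : Finset V := (Iᶜ : Set V).toFinite.toFinset with hS
  have hScard : S.card = k := by
    have h1 := Set.ncard_add_ncard_compl I (Set.toFinite I) (Set.toFinite _)
    have h2 : (Iᶜ : Set V).ncard = S.card :=
      Set.ncard_eq_toFinset_card _ (Set.toFinite _)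
    rw [Nat.card_eq_fintype_card] at h1
    omega
  have hQsub : ∀ v ∈ I, Qset G σ v ⊆ Iᶜ := by
    intro v hv u hu
    simp only [Set.mem_compl_iff]
    intro hu'
    exact hI hv hu' (G.ne_of_adj hu.1) hu.1
  have hQint : ∀ u ∈ I, ∀ v ∈ I, u ≠ v → (Qset G σ u ∩ Qset G σ v).ncard < gam := by
    intro u hu v hv huv
    rcases le_total (σ u) (σ v) with h | h
    · have hna : ¬ G.Adj u v := hI hu hv huv
      refine lt_of_le_of_lt (Set.ncard_le_ncard ?_ (Set.toFinite _))
        (hclo u v h huv.symm hna)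
      rintro x ⟨⟨ha1, hl1⟩, ⟨ha2, hl2⟩⟩
      exact ⟨ha1, ha2, le_of_lt hl1⟩
    · have hna : ¬ G.Adj v u := hI hv hu huv.symm
      refine lt_of_le_of_lt (Set.ncard_le_ncard ?_ (Set.toFinite _))
        (hclo v u h huv hna)
      rintro x ⟨⟨ha1, hl1⟩, ⟨ha2, hl2⟩⟩
      exact ⟨ha2, ha1, le_of_lt hl2⟩
  set Ff : Finset (Finset V) := hFfin.toFinset.image g with hFf
  have hcard1 : F.ncard = Ff.card := by
    rw [Set.ncard_eq_toFinset_card F hFfin, hFf,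
      Finset.card_image_of_injective _ hginj]
  have hsub : ∀ A ∈ Ff, A ⊆ S := by
    intro A hA
    rw [hFf, Finset.mem_image] at hA
    obtain ⟨s, hs, rfl⟩ := hA
    rw [Set.Finite.mem_toFinset] at hs
    obtain ⟨v, hv, rfl⟩ := hs
    intro x hx
    rw [hg] at hx
    simp only at hx
    rw [Set.Finite.mem_toFinset] at hx
    rw [hS, Set.Finite.mem_toFinset]
    exact hQsub v hv hx
  have hpair : ∀ A ∈ Ff, ∀ B ∈ Ff, A ≠ B → (A ∩ B).card < gam := by
    intro A hA B hB hAB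
    rw [hFf, Finset.mem_image] at hA hB
    obtain ⟨s, hs, rfl⟩ := hA
    obtain ⟨t, ht, rfl⟩ := hB
    rw [Set.Finite.mem_toFinset] at hs ht
    obtain ⟨u, hu, rfl⟩ := hs
    obtain ⟨v, hv, rfl⟩ := ht
    have hst : Qset G σ u ≠ Qset G σ v := fun h => hAB (congrArg g h)
    have huv : u ≠ v := fun h => hst (congrArg _ h)
    have heq : g (Qset G σ u) ∩ g (Qset G σ v)
        = ((Qset G σ u ∩ Qset G σ v).toFinite).toFinset := by
      rw [hg]
      exact (Set.Finite.toFinset_inter _ _ _).symm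
    rw [heq, ← Set.ncard_eq_toFinset_card _ (Set.toFinite _)]
    exact hQint u hu v hv huv
  have hmain : Ff.card ≤ ∑ i ∈ Finset.range (gam + 1), k.choose i := by
    have := myCombo gam S Ff hsub hpair
    rwa [hScard] at this
  have hfinal : F.ncard ≤ 2 * k ^ gam := by
    rw [hcard1]
    exact hmain.trans (mySumChoose k gam hk1 hgam)
  calc (F.ncard : ℝ) ≤ ((2 * k ^ gam : ℕ) : ℝ) := by exact_mod_cast hfinal
    _ = 2 * (k : ℝ) ^ gam := by push_cast; ring
end

section
/- Let γ ≥ 1 and let G be a finite simple graph with a closure ordering witnessing that G is weakly γ-closed. Let I ⊆ V(G) be an independent set and let k := |V(G)| − |I|. Then the number of vertices v ∈ I such that P(v) contains two distinct nonadjacent vertices is at most (γ − 1) · (k choose 2). -/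
open Set

theorem stmt3 {V : Type*} [Fintype V] (G : SimpleGraph V) (gam : ℕ) (hgam : 1 ≤ gam)
    (σ : V → ℕ) (hσ : IsClosureOrdering G gam σ)
    (I : Set V) (hI : IsIndepSet G I)
    (k : ℕ) (hk : k = Fintype.card V - I.ncard) :
    {v ∈ I | ∃ a ∈ Pset G σ v, ∃ b ∈ Pset G σ v, a ≠ b ∧ ¬ G.Adj a b}.ncard ≤
      (gam - 1) * k.choose 2 := by
  classical
  obtain ⟨hinj, hclose⟩ := hσ
  set S : Set V := {v ∈ I | ∃ a ∈ Pset G σ v, ∃ b ∈ Pset G σ v, a ≠ b ∧ ¬ G.Adj a b} with hS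
  -- choose a σ-ordered bad pair for each bad vertex
  have hch : ∀ v : V, ∃ p : V × V, v ∈ S →
      p.1 ∈ Pset G σ v ∧ p.2 ∈ Pset G σ v ∧ p.1 ≠ p.2 ∧ ¬ G.Adj p.1 p.2 ∧ σ p.1 ≤ σ p.2 := by
    intro v
    by_cases hv : v ∈ S
    · obtain ⟨-, a, ha, b, hb, hab, hnadj⟩ := hv
      rcases le_total (σ a) (σ b) with h | h
      · exact ⟨(a, b), fun _ => ⟨ha, hb, hab, hnadj, h⟩⟩
      · exact ⟨(b, a), fun _ => ⟨hb, ha, hab.symm, fun h' => hnadj h'.symm, h⟩⟩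
    · exact ⟨(v, v), fun h => absurd h hv⟩
  choose f hf using hch
  set SF : Finset V := S.toFinset with hSF
  have hScard : S.ncard = SF.card := Set.ncard_eq_toFinset_card' S
  -- members of chosen pairs are outside I
  have houtI : ∀ v ∈ S, (f v).1 ∉ I ∧ (f v).2 ∉ I := by
    intro v hv
    obtain ⟨h1, h2, -, -, -⟩ := hf v hv
    have hvI : v ∈ I := hv.1
    constructor
    · intro hmem
      exact hI hvI hmem (G.ne_of_adj h1.1) h1.1
    · intro hmem
      exact hI hvI hmem (G.ne_of_adj h2.1) h2.1
  -- first bound: fibers of f have size at most gam - 1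
  have h1 : SF.card ≤ (gam - 1) * (SF.image f).card := by
    apply Finset.card_le_mul_card_image
    intro p hp
    obtain ⟨v0, hv0, hfv0⟩ := Finset.mem_image.mp hp
    have hv0S : v0 ∈ S := Set.mem_toFinset.mp hv0
    obtain ⟨ha1, ha2, hne, hnadj, hle⟩ := hf v0 hv0S
    rw [← hfv0]
    have hlt := hclose (f v0).1 (f v0).2 hle (fun h => hne h.symm) hnadj
    have hsub : (SF.filter fun x => f x = f v0) ⊆
        {u : V | G.Adj (f v0).1 u ∧ G.Adj (f v0).2 u ∧ σ (f v0).1 ≤ σ u}.toFinset := by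
      intro x hx
      obtain ⟨hxS, hxf⟩ := Finset.mem_filter.mp hx
      have hxS' : x ∈ S := Set.mem_toFinset.mp hxS
      obtain ⟨hb1, hb2, -, -, -⟩ := hf x hxS'
      rw [hxf] at hb1 hb2
      exact Set.mem_toFinset.mpr ⟨hb1.1.symm, hb2.1.symm, le_of_lt hb1.2⟩
    have hcard2 := Finset.card_le_card hsub
    rw [← Set.ncard_eq_toFinset_card'] at hcard2
    omega
  -- second bound: the image has at most (k choose 2) elements
  have h2 : (SF.image f).card ≤ k.choose 2 := by
    set T : Finset V := Iᶜ.toFinset with hT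
    have hTcard : T.card = k := by
      rw [hT, Set.toFinset_compl, Finset.card_compl, hk, Set.ncard_eq_toFinset_card']
    have hkey : ∀ p ∈ SF.image f, p.1 ∈ T ∧ p.2 ∈ T ∧ p.1 ≠ p.2 ∧ σ p.1 < σ p.2 := by
      intro p hp
      obtain ⟨v0, hv0, hfv0⟩ := Finset.mem_image.mp hp
      have hv0S : v0 ∈ S := Set.mem_toFinset.mp hv0
      obtain ⟨-, -, hne, -, hle⟩ := hf v0 hv0S
      obtain ⟨ho1, ho2⟩ := houtI v0 hv0S
      subst hfv0
      refine ⟨Set.mem_toFinset.mpr ho1, Set.mem_toFinset.mpr ho2, hne, ?_⟩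
      exact lt_of_le_of_ne hle (fun h => hne (hinj h))
    calc (SF.image f).card ≤ (T.powersetCard 2).card := by
          apply Finset.card_le_card_of_injOn (fun p => ({p.1, p.2} : Finset V))
          · intro p hp
            obtain ⟨hp1, hp2, hne, -⟩ := hkey p hp
            rw [Finset.mem_coe, Finset.mem_powersetCard]
            refine ⟨?_, Finset.card_pair hne⟩
            intro x hx
            rcases Finset.mem_insert.mp hx with h | h
            · exact h ▸ hp1
            · exact (Finset.mem_singleton.mp h) ▸ hp2
          · intro p hp q hq hpq
            obtain ⟨-, -, hnep, hltp⟩ := hkey p hp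
            obtain ⟨-, -, hneq, hltq⟩ := hkey q hq
            simp only at hpq
            have hp1 : p.1 ∈ ({q.1, q.2} : Finset V) := by
              rw [← hpq]; exact Finset.mem_insert_self _ _
            have hp2 : p.2 ∈ ({q.1, q.2} : Finset V) := by
              rw [← hpq]; simp
            simp only [Finset.mem_insert, Finset.mem_singleton] at hp1 hp2
            have : p.1 = q.1 ∧ p.2 = q.2 := by
              rcases hp1 with h1 | h1 <;> rcases hp2 with h2 | h2
              · exact absurd (h1.trans h2.symm) hnep
              · exact ⟨h1, h2⟩
              · exfalso; rw [h1, h2] at hltp; omega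
              · exact absurd (h1.trans h2.symm) hnep
            exact Prod.ext this.1 this.2
      _ = k.choose 2 := by rw [Finset.card_powersetCard, hTcard]
  rw [hScard]
  calc SF.card ≤ (gam - 1) * (SF.image f).card := h1
    _ ≤ (gam - 1) * k.choose 2 := Nat.mul_le_mul_left _ h2
end

section
/- There is an absolute constant C > 0 such that the following holds. Let γ ≥ 1 be an integer, let G be a finite simple graph with a closure ordering witnessing that G is weakly γ-closed, and let I ⊆ V(G) be an independent set with k := |V(G)| − |I| ≥ 1. Then the number of distinct sets in the family {P(v) : v ∈ I and P(v) is a clique in G} is at most C · 3^{γ/3} · k^{γ+3}. -/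
open Set

/-- The signature of a set `K`: its elements having fewer than `gam` elements of `K`
above them in the ordering `σ` (i.e. the top `min(|K|, gam)` elements). -/
def sigTop {V : Type*} (gam : ℕ) (σ : V → ℕ) (K : Set V) : Set V :=
  {u ∈ K | {x ∈ K | σ u < σ x}.ncard < gam}

section Aux

variable {V : Type} [Fintype V] {gam : ℕ} {σ : V → ℕ} {K : Set V}

lemma sigTop_subset : sigTop gam σ K ⊆ K := fun _ hu => hu.1

lemma lt_of_not_mem_sigTop (hinj : Function.Injective σ) {x t : V}
    (hx : x ∈ K) (hxT : x ∉ sigTop gam σ K) (ht : t ∈ sigTop gam σ K) : σ x < σ t := by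
  by_contra h
  push_neg at h
  rcases lt_or_eq_of_le h with h | h
  · -- σ t < σ x : everything above x, plus x itself, is above t
    have hsub : insert x {y ∈ K | σ x < σ y} ⊆ {y ∈ K | σ t < σ y} := by
      rintro y (rfl | ⟨hyK, hy⟩)
      · exact ⟨hx, h⟩
      · exact ⟨hyK, h.trans hy⟩
    have hxnot : x ∉ {y ∈ K | σ x < σ y} := fun hmem => lt_irrefl _ hmem.2
    have h1 : {y ∈ K | σ x < σ y}.ncard + 1 ≤ {y ∈ K | σ t < σ y}.ncard := by
      rw [← Set.ncard_insert_of_notMem hxnot (Set.toFinite _)]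
      exact Set.ncard_le_ncard hsub (Set.toFinite _)
    have h2 : gam ≤ {y ∈ K | σ x < σ y}.ncard := by
      by_contra hc
      exact hxT ⟨hx, Nat.lt_of_not_le hc⟩
    have h3 := ht.2
    omega
  · exact hxT (hinj h ▸ ht)

lemma gam_le_ncard_sigTop (hne : (K \ sigTop gam σ K).Nonempty) :
    gam ≤ (sigTop gam σ K).ncard := by
  obtain ⟨m, hm, hmax⟩ := Set.Finite.exists_maximalFor σ _ (Set.toFinite _) hne
  have hsub : {y ∈ K | σ m < σ y} ⊆ sigTop gam σ K := by
    rintro y ⟨hyK, hy⟩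
    by_contra hyT
    exact absurd (hmax ⟨hyK, hyT⟩ hy.le) (not_le.2 hy)
  have h2 : gam ≤ {y ∈ K | σ m < σ y}.ncard := by
    by_contra hc
    exact hm.2 ⟨hm.1, Nat.lt_of_not_le hc⟩
  exact h2.trans (Set.ncard_le_ncard hsub (Set.toFinite _))

lemma ncard_sigTop_le (hinj : Function.Injective σ) : (sigTop gam σ K).ncard ≤ gam := by
  by_contra hc
  push_neg at hc
  have hne : (sigTop gam σ K).Nonempty := by
    apply Set.nonempty_of_ncard_ne_zero; omega
  obtain ⟨m, hm, hmin⟩ := Set.Finite.exists_minimalFor σ _ (Set.toFinite _) hne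
  have hsub : sigTop gam σ K \ {m} ⊆ {y ∈ K | σ m < σ y} := by
    rintro y ⟨hyT, hy⟩
    refine ⟨hyT.1, ?_⟩
    rcases lt_trichotomy (σ m) (σ y) with h | h | h
    · exact h
    · exact absurd (hinj h.symm) (by simpa using hy)
    · exact absurd ((hinj (le_antisymm (hmin hyT h.le) h.le)).symm) (by simpa using hy)
  have h1 : (sigTop gam σ K \ {m}).ncard = (sigTop gam σ K).ncard - 1 :=
    Set.ncard_diff_singleton_of_mem hm
  have h2 := Set.ncard_le_ncard hsub (Set.toFinite _)
  have h3 := hm.2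
  omega

lemma pset_subset_of_sigTop_eq {G : SimpleGraph V} (hclo : IsClosureOrdering G gam σ)
    (hgam : 1 ≤ gam) {v w : V}
    (hKc : G.IsClique (Pset G σ v)) (hLc : G.IsClique (Pset G σ w))
    (hvw : σ v ≤ σ w)
    (hT : sigTop gam σ (Pset G σ v) = sigTop gam σ (Pset G σ w)) :
    Pset G σ v = Pset G σ w := by
  obtain ⟨hinj, hclos⟩ := hclo
  set K := Pset G σ v with hK
  set L := Pset G σ w with hL
  apply Set.Subset.antisymm
  · -- K ⊆ L
    intro x hx
    by_contra hxL
    have hxv : σ x < σ v := hx.2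
    have hxw : σ x < σ w := lt_of_lt_of_le hxv hvw
    have hnadj : ¬ G.Adj x w := fun h => hxL ⟨h.symm, hxw⟩
    have hxT : x ∉ sigTop gam σ K := by
      intro hmem
      exact hxL (sigTop_subset (hT ▸ hmem))
    have hcard : gam ≤ (sigTop gam σ K).ncard := gam_le_ncard_sigTop ⟨x, hx, hxT⟩
    have hclose := hclos x w hxw.le (fun h => by simp [h] at hxw) hnadj
    have hsub : sigTop gam σ K ⊆ {u : V | G.Adj x u ∧ G.Adj w u ∧ σ x ≤ σ u} := by
      intro t ht
      have htK : t ∈ K := sigTop_subset ht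
      have htL : t ∈ L := sigTop_subset (hT ▸ ht)
      have hne : x ≠ t := fun h => hxT (h ▸ ht)
      exact ⟨hKc hx htK hne, htL.1, (lt_of_not_mem_sigTop hinj hx hxT ht).le⟩
    have := Set.ncard_le_ncard hsub (Set.toFinite _)
    omega
  · -- L ⊆ K
    intro y hy
    by_contra hyK
    have hyT : y ∉ sigTop gam σ L := by
      intro hmem
      exact hyK (sigTop_subset (hT ▸ hmem))
    have hcard : gam ≤ (sigTop gam σ L).ncard := gam_le_ncard_sigTop ⟨y, hy, hyT⟩
    have hne : (sigTop gam σ L).Nonempty := by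
      apply Set.nonempty_of_ncard_ne_zero; omega
    obtain ⟨t₀, ht₀⟩ := hne
    have ht₀K : t₀ ∈ K := sigTop_subset (hT ▸ ht₀)
    have hyv : σ y < σ v := lt_trans (lt_of_not_mem_sigTop hinj hy hyT ht₀) ht₀K.2
    have hnadj : ¬ G.Adj y v := fun h => hyK ⟨h.symm, hyv⟩
    have hclose := hclos y v hyv.le (fun h => by simp [h] at hyv) hnadj
    have hsub : sigTop gam σ L ⊆ {u : V | G.Adj y u ∧ G.Adj v u ∧ σ y ≤ σ u} := by
      intro t ht
      have htL : t ∈ L := sigTop_subset ht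
      have htK : t ∈ K := sigTop_subset (hT ▸ ht)
      have hne' : y ≠ t := fun h => hyT (h ▸ ht)
      exact ⟨hLc hy htL hne', htK.1, (lt_of_not_mem_sigTop hinj hy hyT ht).le⟩
    have := Set.ncard_le_ncard hsub (Set.toFinite _)
    omega

end Aux

theorem stmt4 : ∃ C : ℝ, 0 < C ∧
    ∀ (V : Type) [Fintype V] (G : SimpleGraph V) (gam : ℕ), 1 ≤ gam →
      ∀ σ : V → ℕ, IsClosureOrdering G gam σ →
      ∀ I : Set V, IsIndepSet G I →
      ∀ k : ℕ, k = Fintype.card V - I.ncard → 1 ≤ k →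
      (((Pset G σ) '' {v ∈ I | G.IsClique (Pset G σ v)}).ncard : ℝ) ≤
        C * (3 : ℝ) ^ ((gam : ℝ) / 3) * (k : ℝ) ^ (gam + 3) := by
  classical
  refine ⟨3, by norm_num, ?_⟩
  intro V _ G gam hgam σ hclo I hI k hk hk1
  set F : Set (Set V) := (Pset G σ) '' {v ∈ I | G.IsClique (Pset G σ v)} with hF
  -- the complement of I as a finset
  set Xf : Finset V := (Iᶜ : Set V).toFinset with hXf
  have hXfcard : Xf.card = k := by
    have h1 : Xf.card = (Iᶜ : Set V).ncard := (Set.ncard_eq_toFinset_card' _).symm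
    have h2 : I.ncard + (Iᶜ : Set V).ncard = Fintype.card V := by
      rw [← Nat.card_eq_fintype_card]
      exact Set.ncard_add_ncard_compl I
    omega
  -- the collection of candidate signatures
  set 𝒮 : Finset (Finset V) := Xf.powerset.filter (fun S => S.card ≤ gam) with hS
  -- bound the number of cliques by the number of signatures
  have hstep1 : F.ncard ≤ 𝒮.card := by
    rw [← Set.ncard_coe_finset]
    apply Set.ncard_le_ncard_of_injOn (fun K => (sigTop gam σ K).toFinset)
    · -- maps into 𝒮
      rintro K ⟨v, ⟨hvI, hvC⟩, rfl⟩
      simp only [hS, Finset.mem_coe, Finset.mem_filter, Finset.mem_powerset]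
      constructor
      · intro u hu
        have huP : u ∈ Pset G σ v := sigTop_subset (by simpa using hu)
        rw [hXf, Set.mem_toFinset]
        intro huI
        exact hI hvI huI (huP.1.ne) huP.1
      · rw [← Set.ncard_eq_toFinset_card']
        exact ncard_sigTop_le hclo.1
    · -- injective
      rintro K ⟨v, ⟨hvI, hvC⟩, rfl⟩ L ⟨w, ⟨hwI, hwC⟩, rfl⟩ heq
      have heq' : sigTop gam σ (Pset G σ v) = sigTop gam σ (Pset G σ w) := by
        rwa [Set.toFinset_inj] at heq
      rcases le_total (σ v) (σ w) with h | h
      · exact pset_subset_of_sigTop_eq hclo hgam hvC hwC h heq'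
      · exact (pset_subset_of_sigTop_eq hclo hgam hwC hvC h heq'.symm).symm
  -- bound the number of signatures
  have hstep2 : 𝒮.card ≤ (gam + 1) * k ^ gam := by
    have hsub : 𝒮 ⊆ (Finset.range (gam + 1)).biUnion (fun i => Finset.powersetCard i Xf) := by
      intro S hSmem
      simp only [hS, Finset.mem_filter, Finset.mem_powerset] at hSmem
      rw [Finset.mem_biUnion]
      exact ⟨S.card, Finset.mem_range.2 (Nat.lt_succ_of_le hSmem.2),
        Finset.mem_powersetCard.2 ⟨hSmem.1, rfl⟩⟩
    calc 𝒮.card ≤ ((Finset.range (gam + 1)).biUnion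
          (fun i => Finset.powersetCard i Xf)).card := Finset.card_le_card hsub
      _ ≤ ∑ i ∈ Finset.range (gam + 1), (Finset.powersetCard i Xf).card :=
          Finset.card_biUnion_le
      _ ≤ ∑ i ∈ Finset.range (gam + 1), k ^ gam := by
          apply Finset.sum_le_sum
          intro i hi
          rw [Finset.card_powersetCard, hXfcard]
          exact (Nat.choose_le_pow k i).trans
            (Nat.pow_le_pow_right hk1 (Nat.lt_succ_iff.1 (Finset.mem_range.1 hi)))
      _ = (gam + 1) * k ^ gam := by
          rw [Finset.sum_const, Finset.card_range, smul_eq_mul]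
  have hN : F.ncard ≤ (gam + 1) * k ^ gam := hstep1.trans hstep2
  -- now the real-number estimate
  have hk1R : (1 : ℝ) ≤ (k : ℝ) := by exact_mod_cast hk1
  have hpow : (k : ℝ) ^ gam ≤ (k : ℝ) ^ (gam + 3) :=
    pow_le_pow_right₀ hk1R (by omega)
  have hcube : (1.4 : ℝ) ≤ (3 : ℝ) ^ ((1 : ℝ) / 3) := by
    have h1 : ((1.4 : ℝ) ^ (3 : ℕ)) ≤ 3 := by norm_num
    have h2 := Real.rpow_le_rpow (by positivity) h1 (by norm_num : (0:ℝ) ≤ 1/3)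
    calc (1.4 : ℝ) = ((1.4 : ℝ) ^ (3:ℕ)) ^ ((1:ℝ)/3) := by
          rw [← Real.rpow_natCast (1.4 : ℝ) 3, ← Real.rpow_mul (by norm_num)]
          norm_num
      _ ≤ (3 : ℝ) ^ ((1:ℝ)/3) := h2
  have hbern : (1 : ℝ) + gam * 0.4 ≤ (1.4 : ℝ) ^ gam := by
    have h := one_add_mul_le_pow (by norm_num : (-2 : ℝ) ≤ 0.4) gam
    have h14 : ((1 : ℝ) + 0.4) = 1.4 := by norm_num
    rwa [h14] at h
  have hgampow : ((gam : ℝ) + 1) ≤ 3 * (3 : ℝ) ^ ((gam : ℝ) / 3) := by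
    have h3 : (3 : ℝ) ^ ((gam : ℝ) / 3) = ((3 : ℝ) ^ ((1:ℝ)/3)) ^ gam := by
      rw [← Real.rpow_natCast ((3 : ℝ) ^ ((1:ℝ)/3)) gam, ← Real.rpow_mul (by norm_num)]
      ring_nf
    have h4 : (1.4 : ℝ) ^ gam ≤ ((3 : ℝ) ^ ((1:ℝ)/3)) ^ gam :=
      pow_le_pow_left₀ (by norm_num) hcube gam
    rw [h3]
    nlinarith
  calc (F.ncard : ℝ) ≤ ((gam + 1) * k ^ gam : ℕ) := by exact_mod_cast hN
    _ = ((gam : ℝ) + 1) * (k : ℝ) ^ gam := by push_cast; ring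
    _ ≤ (3 * (3 : ℝ) ^ ((gam : ℝ) / 3)) * (k : ℝ) ^ (gam + 3) := by
        apply mul_le_mul hgampow hpow (by positivity) (by positivity)
    _ = 3 * (3 : ℝ) ^ ((gam : ℝ) / 3) * (k : ℝ) ^ (gam + 3) := by ring
end

section
/- Let γ ≥ 1 and k ≥ 1 be integers, and let G be a weakly γ-closed finite simple bipartite graph. If G contains a matching of size at least 4γk² + 3k, then G contains an induced matching of size at least k. -/
open Set

/-- A matching: a set of edges (given as ordered pairs of adjacent vertices) with
pairwise disjoint endpoints. -/
def IsMatchingSet {V : Type*} (G : SimpleGraph V) (M : Set (V × V)) : Prop :=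
  (∀ p ∈ M, G.Adj p.1 p.2) ∧
    ∀ p ∈ M, ∀ q ∈ M, p ≠ q →
      p.1 ≠ q.1 ∧ p.1 ≠ q.2 ∧ p.2 ≠ q.1 ∧ p.2 ≠ q.2

/-- An induced matching: a matching such that no edge of `G` joins endpoints of two
distinct edges of the matching. -/
def IsInducedMatchingSet {V : Type*} (G : SimpleGraph V) (M : Set (V × V)) : Prop :=
  IsMatchingSet G M ∧
    ∀ p ∈ M, ∀ q ∈ M, p ≠ q →
      ¬ G.Adj p.1 q.1 ∧ ¬ G.Adj p.1 q.2 ∧ ¬ G.Adj p.2 q.1 ∧ ¬ G.Adj p.2 q.2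

open Finset

private lemma sum_filter_swap {α : Type*} [DecidableEq α] (F : Finset α) (Q : α → α → Prop)
    [∀ a b, Decidable (Q a b)] :
    ∑ g ∈ F, (F.filter (fun h => Q g h)).card = ∑ h ∈ F, (F.filter (fun g => Q g h)).card := by
  simp_rw [Finset.card_filter]
  exact Finset.sum_comm

private lemma exists_indep {α : Type*} [DecidableEq α] (d : ℕ) (R : α → α → Prop)
    [DecidableRel R] :
    ∀ F : Finset α, (∀ h ∈ F, (F.filter (fun h' => h ≠ h' ∧ R h h')).card ≤ d) →
      ∃ S : Finset α, S ⊆ F ∧ F.card ≤ (2 * d + 1) * S.card ∧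
        ∀ a ∈ S, ∀ b ∈ S, a ≠ b → ¬ R a b := by
  intro F
  induction F using Finset.strongInduction with
  | _ F ih =>
    intro hout
    rcases F.eq_empty_or_nonempty with rfl | hne
    · exact ⟨∅, Finset.Subset.refl _, by simp, by simp⟩
    · have hswap : ∑ g ∈ F, (F.filter (fun h => g ≠ h ∧ R g h)).card
          = ∑ h ∈ F, (F.filter (fun g => g ≠ h ∧ R g h)).card :=
        sum_filter_swap F (fun g h => g ≠ h ∧ R g h)
      have hsum : ∑ h ∈ F, ((F.filter (fun h' => h ≠ h' ∧ R h h')).card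
            + (F.filter (fun h' => h' ≠ h ∧ R h' h)).card) ≤ 2 * d * F.card := by
        rw [Finset.sum_add_distrib]
        have h1 : ∑ g ∈ F, (F.filter (fun h => g ≠ h ∧ R g h)).card ≤ d * F.card := by
          calc ∑ g ∈ F, (F.filter (fun h => g ≠ h ∧ R g h)).card
              ≤ ∑ _g ∈ F, d := Finset.sum_le_sum (fun g hg => hout g hg)
            _ = d * F.card := by rw [Finset.sum_const, smul_eq_mul, mul_comm]
        have h2 : ∑ h ∈ F, (F.filter (fun h' => h' ≠ h ∧ R h' h)).card ≤ d * F.card := by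
          rw [← hswap] at *
          exact h1
        have heq : 2 * d * F.card = d * F.card + d * F.card := by ring
        omega
      have hex : ∃ h₀ ∈ F, (F.filter (fun h' => h₀ ≠ h' ∧ R h₀ h')).card
          + (F.filter (fun h' => h' ≠ h₀ ∧ R h' h₀)).card ≤ 2 * d := by
        by_contra hc
        push_neg at hc
        have hge : ∀ h ∈ F, 2 * d + 1 ≤ (F.filter (fun h' => h ≠ h' ∧ R h h')).card
            + (F.filter (fun h' => h' ≠ h ∧ R h' h)).card := fun h hh => hc h hh
        have h2 := Finset.card_nsmul_le_sum F _ _ hge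
        rw [smul_eq_mul] at h2
        have h3 := le_trans h2 hsum
        have h4 : F.card * (2 * d + 1) = F.card * (2 * d) + F.card := by ring
        have h5 : F.card * (2 * d) = 2 * d * F.card := by ring
        have h6 : 0 < F.card := hne.card_pos
        omega
      obtain ⟨h₀, hh₀F, hdeg⟩ := hex
      set F' := F.filter (fun h' => h' ≠ h₀ ∧ ¬ R h₀ h' ∧ ¬ R h' h₀) with hF'def
      have hF'sub : F' ⊆ F := Finset.filter_subset _ _
      have hh₀notF' : h₀ ∉ F' := by simp [hF'def]
      have hF'ss : F' ⊂ F := (Finset.ssubset_iff_of_subset hF'sub).mpr ⟨h₀, hh₀F, hh₀notF'⟩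
      have hout' : ∀ h ∈ F', (F'.filter (fun h' => h ≠ h' ∧ R h h')).card ≤ d := by
        intro h hh
        exact le_trans
          (Finset.card_le_card (Finset.filter_subset_filter _ hF'sub))
          (hout h (hF'sub hh))
      obtain ⟨S, hSsub, hScard, hSpair⟩ := ih F' hF'ss hout'
      have hsplit : F ⊆ insert h₀ ((F.filter (fun h' => h₀ ≠ h' ∧ R h₀ h')
          ∪ F.filter (fun h' => h' ≠ h₀ ∧ R h' h₀)) ∪ F') := by
        intro x hx
        simp only [Finset.mem_insert, Finset.mem_union, Finset.mem_filter, hF'def]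
        by_cases hxh : x = h₀
        · exact Or.inl hxh
        · by_cases hr1 : R h₀ x
          · exact Or.inr (Or.inl (Or.inl ⟨hx, Ne.symm hxh, hr1⟩))
          · by_cases hr2 : R x h₀
            · exact Or.inr (Or.inl (Or.inr ⟨hx, hxh, hr2⟩))
            · exact Or.inr (Or.inr ⟨hx, hxh, hr1, hr2⟩)
      have hcardF : F.card ≤ 2 * d + 1 + F'.card := by
        have := Finset.card_le_card hsplit
        have h7 := Finset.card_insert_le h₀ ((F.filter (fun h' => h₀ ≠ h' ∧ R h₀ h')
          ∪ F.filter (fun h' => h' ≠ h₀ ∧ R h' h₀)) ∪ F')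
        have h8 := Finset.card_union_le (F.filter (fun h' => h₀ ≠ h' ∧ R h₀ h')
          ∪ F.filter (fun h' => h' ≠ h₀ ∧ R h' h₀)) F'
        have h9 := Finset.card_union_le (F.filter (fun h' => h₀ ≠ h' ∧ R h₀ h'))
          (F.filter (fun h' => h' ≠ h₀ ∧ R h' h₀))
        omega
      have hh₀S : h₀ ∉ S := fun hmem => hh₀notF' (hSsub hmem)
      refine ⟨insert h₀ S, ?_, ?_, ?_⟩
      · exact Finset.insert_subset hh₀F (hSsub.trans hF'sub)
      · rw [Finset.card_insert_of_notMem hh₀S]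
        have : (2 * d + 1) * (S.card + 1) = (2 * d + 1) * S.card + (2 * d + 1) := by ring
        omega
      · intro a ha b hb hab
        rcases Finset.mem_insert.mp ha with rfl | haS
        · rcases Finset.mem_insert.mp hb with rfl | hbS
          · exact absurd rfl hab
          · have := (Finset.mem_filter.mp (hSsub hbS)).2
            exact this.2.1
        · rcases Finset.mem_insert.mp hb with rfl | hbS
          · have := (Finset.mem_filter.mp (hSsub haS)).2
            exact this.2.2
          · exact hSpair a haS b hbS hab



set_option maxHeartbeats 1000000 in
private lemma main_ind {V : Type*} [Fintype V] (G : SimpleGraph V) (gam : ℕ) (hgam : 1 ≤ gam)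
    (σ : V → ℕ) (hinj : Function.Injective σ)
    (hclos : ∀ v w : V, σ v ≤ σ w → w ≠ v → ¬ G.Adj v w →
      {u : V | G.Adj v u ∧ G.Adj w u ∧ σ v ≤ σ u}.ncard < gam)
    (A : Set V) (hA : IsIndepSet G A) (hA' : IsIndepSet G Aᶜ) :
    ∀ (k : ℕ) (MF : Finset (V × V)),
      (∀ p ∈ MF, G.Adj p.1 p.2) →
      (∀ p ∈ MF, ∀ q ∈ MF, p ≠ q → p.1 ≠ q.1 ∧ p.1 ≠ q.2 ∧ p.2 ≠ q.1 ∧ p.2 ≠ q.2) →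
      4 * gam * k ^ 2 + 3 * k ≤ MF.card →
      ∃ S : Finset (V × V), S ⊆ MF ∧ k ≤ S.card ∧
        ∀ p ∈ S, ∀ q ∈ S, p ≠ q →
          ¬ G.Adj p.1 q.1 ∧ ¬ G.Adj p.1 q.2 ∧ ¬ G.Adj p.2 q.1 ∧ ¬ G.Adj p.2 q.2 := by
  classical
  have hopp : ∀ {x y : V}, G.Adj x y → (x ∈ A ↔ y ∉ A) := by
    intro x y hxy
    constructor
    · intro hx hy
      exact hA hx hy (G.ne_of_adj hxy) hxy
    · intro hy
      by_contra hx
      exact hA' (by simpa using hx) (by simpa using hy) (G.ne_of_adj hxy) hxy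
  have hsame : ∀ {x y : V}, (x ∈ A ↔ y ∈ A) → ¬ G.Adj x y := by
    intro x y hiff hxy
    have h2 := hopp hxy
    tauto
  intro k
  induction k with
  | zero =>
    intro MF _ _ _
    exact ⟨∅, Finset.empty_subset _, Nat.zero_le _, by simp⟩
  | succ n ih =>
    intro MF hadj hdisj hcard
    set Fam : V → Finset (V × V) := fun v =>
      MF.filter (fun h => h.1 ≠ v ∧ h.2 ≠ v ∧
        ((G.Adj v h.1 ∧ σ v < σ h.1) ∨ (G.Adj v h.2 ∧ σ v < σ h.2))) with hFamdef
    have hFamsub : ∀ v, Fam v ⊆ MF := fun v => Finset.filter_subset _ _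
    have hFammem : ∀ v h, h ∈ Fam v ↔ (h ∈ MF ∧ h.1 ≠ v ∧ h.2 ≠ v ∧
        ((G.Adj v h.1 ∧ σ v < σ h.1) ∨ (G.Adj v h.2 ∧ σ v < σ h.2))) := by
      intro v h
      rw [hFamdef]
      exact Finset.mem_filter
    have huniq : ∀ v : V, ∀ h ∈ MF, ¬ (G.Adj v h.1 ∧ G.Adj v h.2) := by
      rintro v h hh ⟨a1, a2⟩
      have i1 := hopp a1
      have i2 := hopp a2
      have : (h.1 ∈ A ↔ h.2 ∈ A) := by tauto
      exact hsame this (hadj h hh)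
    by_cases hbig : ∃ v : V, (2 * gam - 1) * n + 1 ≤ (Fam v).card
    · -- extraction case
      obtain ⟨v, hv⟩ := hbig
      set wf : V × V → V := fun h => if G.Adj v h.1 then h.1 else h.2 with hwfdef
      set zf : V × V → V := fun h => if G.Adj v h.1 then h.2 else h.1 with hzfdef
      have hwz : ∀ h ∈ Fam v, G.Adj v (wf h) ∧ σ v < σ (wf h) ∧ ¬ G.Adj v (zf h) ∧
          ((h.1 = wf h ∧ h.2 = zf h) ∨ (h.1 = zf h ∧ h.2 = wf h)) ∧
          G.Adj (wf h) (zf h) := by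
        intro h hh
        obtain ⟨hMF, h1v, h2v, hd⟩ := (hFammem v h).mp hh
        by_cases hc : G.Adj v h.1
        · have hwf : wf h = h.1 := if_pos hc
          have hzf : zf h = h.2 := if_pos hc
          have hnot2 : ¬ G.Adj v h.2 := fun a2 => huniq v h hMF ⟨hc, a2⟩
          have hsig : σ v < σ h.1 := by
            rcases hd with ⟨_, hs⟩ | ⟨ha, _⟩
            · exact hs
            · exact absurd ha hnot2
          rw [hwf, hzf]
          exact ⟨hc, hsig, hnot2, Or.inl ⟨rfl, rfl⟩, hadj h hMF⟩
        · have hwf : wf h = h.2 := if_neg hc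
          have hzf : zf h = h.1 := if_neg hc
          have hd2 : G.Adj v h.2 ∧ σ v < σ h.2 := by
            rcases hd with ⟨ha, _⟩ | h2
            · exact absurd ha hc
            · exact h2
          rw [hwf, hzf]
          exact ⟨hd2.1, hd2.2, hc, Or.inr ⟨rfl, rfl⟩, (hadj h hMF).symm⟩
      have hzne : ∀ h ∈ Fam v, zf h ≠ v := by
        intro h hh
        obtain ⟨hMF, h1v, h2v, _⟩ := (hFammem v h).mp hh
        rcases (hwz h hh).2.2.2.1 with ⟨_, e⟩ | ⟨e, _⟩
        · rw [← e]; exact h2v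
        · rw [← e]; exact h1v
      have hwinj : ∀ h ∈ Fam v, ∀ h' ∈ Fam v, wf h = wf h' → h = h' := by
        intro h hh h' hh'
        intro he
        by_contra hne
        have hd := hdisj h (hFamsub v hh) h' (hFamsub v hh') hne
        rcases (hwz h hh).2.2.2.1 with ⟨e1, e2⟩ | ⟨e1, e2⟩ <;>
          rcases (hwz h' hh').2.2.2.1 with ⟨f1, f2⟩ | ⟨f1, f2⟩
        · exact hd.1 (by rw [e1, f1, he])
        · exact hd.2.1 (by rw [e1, f2, he])
        · exact hd.2.2.1 (by rw [e2, f1, he])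
        · exact hd.2.2.2 (by rw [e2, f2, he])
      -- out-degree bound
      have hout : ∀ h ∈ Fam v,
          ((Fam v).filter (fun h' => h ≠ h' ∧ G.Adj (zf h) (wf h'))).card ≤ gam - 1 := by
        intro h hh
        set X := (Fam v).filter (fun h' => h ≠ h' ∧ G.Adj (zf h) (wf h')) with hXdef
        have hXsub : X ⊆ Fam v := Finset.filter_subset _ _
        have hcardeq : (X.image wf).card = X.card := by
          apply Finset.card_image_of_injOn
          intro a ha b hb hab
          exact hwinj a (hXsub ha) b (hXsub hb) hab
        have hznev : zf h ≠ v := hzne h hh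
        have hznadj : ¬ G.Adj v (zf h) := (hwz h hh).2.2.1
        have hkey : (X.image wf).card ≤ gam - 1 := by
          rcases le_total (σ v) (σ (zf h)) with hle | hle
          · have hclo := hclos v (zf h) hle hznev hznadj
            have hsub2 : ↑(X.image wf) ⊆ {u : V | G.Adj v u ∧ G.Adj (zf h) u ∧ σ v ≤ σ u} := by
              intro u hu
              simp only [Finset.coe_image, Set.mem_image, Finset.mem_coe] at hu
              obtain ⟨h', hh', rfl⟩ := hu
              have hmem := Finset.mem_filter.mp hh'
              have hw' := hwz h' (hmem.1)
              exact ⟨hw'.1, hmem.2.2, le_of_lt hw'.2.1⟩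
            calc (X.image wf).card = (↑(X.image wf) : Set V).ncard :=
                  (Set.ncard_coe_finset _).symm
              _ ≤ ({u : V | G.Adj v u ∧ G.Adj (zf h) u ∧ σ v ≤ σ u}).ncard :=
                  Set.ncard_le_ncard hsub2 (Set.toFinite _)
              _ ≤ gam - 1 := by omega
          · have hclo := hclos (zf h) v hle (Ne.symm hznev) (fun a => hznadj a.symm)
            have hsub2 : ↑(X.image wf) ⊆ {u : V | G.Adj (zf h) u ∧ G.Adj v u ∧ σ (zf h) ≤ σ u} := by
              intro u hu
              simp only [Finset.coe_image, Set.mem_image, Finset.mem_coe] at hu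
              obtain ⟨h', hh', rfl⟩ := hu
              have hmem := Finset.mem_filter.mp hh'
              have hw' := hwz h' (hmem.1)
              exact ⟨hmem.2.2, hw'.1, le_trans hle (le_of_lt hw'.2.1)⟩
            calc (X.image wf).card = (↑(X.image wf) : Set V).ncard :=
                  (Set.ncard_coe_finset _).symm
              _ ≤ ({u : V | G.Adj (zf h) u ∧ G.Adj v u ∧ σ (zf h) ≤ σ u}).ncard :=
                  Set.ncard_le_ncard hsub2 (Set.toFinite _)
              _ ≤ gam - 1 := by omega
        omega
      obtain ⟨S, hSsub, hScard, hSpair⟩ :=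
        exists_indep (gam - 1) (fun h h' => G.Adj (zf h) (wf h')) (Fam v) hout
      have hgam2 : 2 * (gam - 1) + 1 = 2 * gam - 1 := by omega
      have hScard' : n + 1 ≤ S.card := by
        by_contra hcon
        push_neg at hcon
        have hle : S.card ≤ n := by omega
        have h1 : (2 * gam - 1) * S.card ≤ (2 * gam - 1) * n :=
          Nat.mul_le_mul_left _ hle
        rw [hgam2] at hScard
        have h2 := le_trans hv hScard
        linarith
      refine ⟨S, hSsub.trans (hFamsub v), hScard', ?_⟩
      intro p hp q hq hpq
      have hpF := hSsub hp
      have hqF := hSsub hq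
      have hwp := hwz p hpF
      have hwq := hwz q hqF
      have i1 : (v ∈ A ↔ wf p ∉ A) := hopp hwp.1
      have i2 : (v ∈ A ↔ wf q ∉ A) := hopp hwq.1
      have i3 : (wf p ∈ A ↔ zf p ∉ A) := hopp hwp.2.2.2.2
      have i4 : (wf q ∈ A ↔ zf q ∉ A) := hopp hwq.2.2.2.2
      have hA1 : ¬ G.Adj (wf p) (wf q) := by
        apply hsame
        constructor
        · intro hwpA
          by_contra hwqA
          exact (i1.mp (i2.mpr hwqA)) hwpA
        · intro hwqA
          by_contra hwpA
          exact (i2.mp (i1.mpr hwpA)) hwqA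
      have hA4 : ¬ G.Adj (zf p) (zf q) := by
        apply hsame
        have j1 : (zf p ∈ A ↔ v ∈ A) := by
          rw [i1]
          constructor
          · intro hz hw
            exact (i3.mp hw) hz
          · intro hw
            by_contra hz
            exact hw (i3.mpr hz)
        have j2 : (zf q ∈ A ↔ v ∈ A) := by
          rw [i2]
          constructor
          · intro hz hw
            exact (i4.mp hw) hz
          · intro hw
            by_contra hz
            exact hw (i4.mpr hz)
        exact j1.trans j2.symm
      have hA3 : ¬ G.Adj (zf p) (wf q) := hSpair p hp q hq hpq
      have hA2 : ¬ G.Adj (wf p) (zf q) := fun a => (hSpair q hq p hp (Ne.symm hpq)) a.symm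
      rcases hwp.2.2.2.1 with ⟨e1, e2⟩ | ⟨e1, e2⟩ <;>
        rcases hwq.2.2.2.1 with ⟨f1, f2⟩ | ⟨f1, f2⟩ <;>
        rw [e1, e2, f1, f2] <;>
        exact ⟨by assumption, by assumption, by assumption, by assumption⟩
    · push_neg at hbig
      have hsmall : ∀ u : V, (Fam u).card ≤ (2 * gam - 1) * n := by
        intro u
        have := hbig u
        omega
      have hconfl : ∀ g ∈ MF, ∀ h ∈ MF, h ≠ g →
          ¬(¬ G.Adj g.1 h.1 ∧ ¬ G.Adj g.1 h.2 ∧ ¬ G.Adj g.2 h.1 ∧ ¬ G.Adj g.2 h.2) →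
          (h ∈ Fam g.1 ∨ h ∈ Fam g.2) ∨ (g ∈ Fam h.1 ∨ g ∈ Fam h.2) := by
        intro g hg h hh hne hnc
        have hd := hdisj g hg h hh (Ne.symm hne)
        have hadj4 : G.Adj g.1 h.1 ∨ G.Adj g.1 h.2 ∨ G.Adj g.2 h.1 ∨ G.Adj g.2 h.2 := by
          by_contra hc
          push_neg at hc
          exact hnc ⟨hc.1, hc.2.1, hc.2.2.1, hc.2.2.2⟩
        rcases hadj4 with ha | ha | ha | ha
        · rcases lt_trichotomy (σ g.1) (σ h.1) with hs | hs | hs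
          · exact Or.inl (Or.inl ((hFammem g.1 h).mpr ⟨hh, hd.1.symm, hd.2.1.symm, Or.inl ⟨ha, hs⟩⟩))
          · exact absurd (hinj hs) hd.1
          · exact Or.inr (Or.inl ((hFammem h.1 g).mpr ⟨hg, hd.1, hd.2.2.1, Or.inl ⟨ha.symm, hs⟩⟩))
        · rcases lt_trichotomy (σ g.1) (σ h.2) with hs | hs | hs
          · exact Or.inl (Or.inl ((hFammem g.1 h).mpr ⟨hh, hd.1.symm, hd.2.1.symm, Or.inr ⟨ha, hs⟩⟩))
          · exact absurd (hinj hs) hd.2.1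
          · exact Or.inr (Or.inr ((hFammem h.2 g).mpr ⟨hg, hd.2.1, hd.2.2.2, Or.inl ⟨ha.symm, hs⟩⟩))
        · rcases lt_trichotomy (σ g.2) (σ h.1) with hs | hs | hs
          · exact Or.inl (Or.inr ((hFammem g.2 h).mpr ⟨hh, hd.2.2.1.symm, hd.2.2.2.symm, Or.inl ⟨ha, hs⟩⟩))
          · exact absurd (hinj hs) hd.2.2.1
          · exact Or.inr (Or.inl ((hFammem h.1 g).mpr ⟨hg, hd.1, hd.2.2.1, Or.inr ⟨ha.symm, hs⟩⟩))
        · rcases lt_trichotomy (σ g.2) (σ h.2) with hs | hs | hs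
          · exact Or.inl (Or.inr ((hFammem g.2 h).mpr ⟨hh, hd.2.2.1.symm, hd.2.2.2.symm, Or.inr ⟨ha, hs⟩⟩))
          · exact absurd (hinj hs) hd.2.2.2
          · exact Or.inr (Or.inr ((hFammem h.2 g).mpr ⟨hg, hd.2.1, hd.2.2.2, Or.inr ⟨ha.symm, hs⟩⟩))
      set dC : V × V → ℕ := fun g => (MF.filter (fun h => h ≠ g ∧
        ¬(¬ G.Adj g.1 h.1 ∧ ¬ G.Adj g.1 h.2 ∧ ¬ G.Adj g.2 h.1 ∧ ¬ G.Adj g.2 h.2))).card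
        with hdCdef
      have hdeg : ∀ g ∈ MF, dC g ≤ (Fam g.1).card + (Fam g.2).card
          + (MF.filter (fun h => g ∈ Fam h.1 ∨ g ∈ Fam h.2)).card := by
        intro g hg
        have hsub3 : MF.filter (fun h => h ≠ g ∧
            ¬(¬ G.Adj g.1 h.1 ∧ ¬ G.Adj g.1 h.2 ∧ ¬ G.Adj g.2 h.1 ∧ ¬ G.Adj g.2 h.2))
            ⊆ (Fam g.1 ∪ Fam g.2) ∪ MF.filter (fun h => g ∈ Fam h.1 ∨ g ∈ Fam h.2) := by
          intro h hh
          obtain ⟨hhMF, hne, hnc⟩ := Finset.mem_filter.mp hh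
          rcases hconfl g hg h hhMF hne hnc with (h1 | h1) | h1
          · exact Finset.mem_union_left _ (Finset.mem_union_left _ h1)
          · exact Finset.mem_union_left _ (Finset.mem_union_right _ h1)
          · exact Finset.mem_union_right _ (Finset.mem_filter.mpr ⟨hhMF, h1⟩)
        calc dC g ≤ ((Fam g.1 ∪ Fam g.2) ∪ MF.filter (fun h => g ∈ Fam h.1 ∨ g ∈ Fam h.2)).card :=
              Finset.card_le_card hsub3
          _ ≤ (Fam g.1 ∪ Fam g.2).card + (MF.filter (fun h => g ∈ Fam h.1 ∨ g ∈ Fam h.2)).card :=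
              Finset.card_union_le _ _
          _ ≤ (Fam g.1).card + (Fam g.2).card
              + (MF.filter (fun h => g ∈ Fam h.1 ∨ g ∈ Fam h.2)).card := by
              have := Finset.card_union_le (Fam g.1) (Fam g.2)
              omega
      have hswap2 : ∑ g ∈ MF, (MF.filter (fun h => g ∈ Fam h.1 ∨ g ∈ Fam h.2)).card
          = ∑ h ∈ MF, (MF.filter (fun g => g ∈ Fam h.1 ∨ g ∈ Fam h.2)).card :=
        sum_filter_swap MF (fun g h => g ∈ Fam h.1 ∨ g ∈ Fam h.2)
      have hinner : ∀ h : V × V, (MF.filter (fun g => g ∈ Fam h.1 ∨ g ∈ Fam h.2)).card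
          ≤ (Fam h.1).card + (Fam h.2).card := by
        intro h
        have hsub4 : MF.filter (fun g => g ∈ Fam h.1 ∨ g ∈ Fam h.2) ⊆ Fam h.1 ∪ Fam h.2 := by
          intro x hx
          rcases (Finset.mem_filter.mp hx).2 with h1 | h1
          · exact Finset.mem_union_left _ h1
          · exact Finset.mem_union_right _ h1
        calc (MF.filter (fun g => g ∈ Fam h.1 ∨ g ∈ Fam h.2)).card
            ≤ (Fam h.1 ∪ Fam h.2).card := Finset.card_le_card hsub4
          _ ≤ (Fam h.1).card + (Fam h.2).card := Finset.card_union_le _ _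
      have hsumdeg : ∑ g ∈ MF, dC g ≤ 4 * ((2 * gam - 1) * n) * MF.card := by
        calc ∑ g ∈ MF, dC g
            ≤ ∑ g ∈ MF, ((Fam g.1).card + (Fam g.2).card
              + (MF.filter (fun h => g ∈ Fam h.1 ∨ g ∈ Fam h.2)).card) :=
              Finset.sum_le_sum hdeg
          _ = (∑ g ∈ MF, ((Fam g.1).card + (Fam g.2).card))
              + ∑ g ∈ MF, (MF.filter (fun h => g ∈ Fam h.1 ∨ g ∈ Fam h.2)).card := by
              rw [← Finset.sum_add_distrib]
          _ ≤ (∑ _g ∈ MF, ((2 * gam - 1) * n + (2 * gam - 1) * n))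
              + ∑ _h ∈ MF, ((2 * gam - 1) * n + (2 * gam - 1) * n) := by
              rw [hswap2]
              refine Nat.add_le_add (Finset.sum_le_sum ?_) (Finset.sum_le_sum ?_)
              · exact fun g _ => Nat.add_le_add (hsmall g.1) (hsmall g.2)
              · exact fun h _ => le_trans (hinner h) (Nat.add_le_add (hsmall h.1) (hsmall h.2))
          _ = 4 * ((2 * gam - 1) * n) * MF.card := by
              simp only [Finset.sum_const, smul_eq_mul]
              ring
      have hpos : 0 < MF.card := by
        have h1 : 1 ≤ 3 * (n + 1) := by omega
        have h2 : 3 * (n + 1) ≤ 4 * gam * (n + 1) ^ 2 + 3 * (n + 1) := Nat.le_add_left _ _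
        omega
      have hexg : ∃ g ∈ MF, dC g ≤ 4 * ((2 * gam - 1) * n) := by
        by_contra hc
        push_neg at hc
        have hge : ∀ g ∈ MF, 4 * ((2 * gam - 1) * n) + 1 ≤ dC g := fun g hg => hc g hg
        have h2 := Finset.card_nsmul_le_sum MF _ _ hge
        rw [smul_eq_mul] at h2
        have h3 := le_trans h2 hsumdeg
        have h4 : MF.card * (4 * ((2 * gam - 1) * n) + 1)
            = 4 * ((2 * gam - 1) * n) * MF.card + MF.card := by ring
        omega
      obtain ⟨gs, hgsMF, hgsdeg⟩ := hexg
      set MF' := MF.filter (fun h => h ≠ gs ∧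
        (¬ G.Adj gs.1 h.1 ∧ ¬ G.Adj gs.1 h.2 ∧ ¬ G.Adj gs.2 h.1 ∧ ¬ G.Adj gs.2 h.2))
        with hMF'def
      have hMF'sub : MF' ⊆ MF := Finset.filter_subset _ _
      have hsplit2 : MF ⊆ insert gs ((MF.filter (fun h => h ≠ gs ∧
          ¬(¬ G.Adj gs.1 h.1 ∧ ¬ G.Adj gs.1 h.2 ∧ ¬ G.Adj gs.2 h.1 ∧ ¬ G.Adj gs.2 h.2))) ∪ MF') := by
        intro h hh
        simp only [Finset.mem_insert, Finset.mem_union, Finset.mem_filter, hMF'def]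
        by_cases h1 : h = gs
        · exact Or.inl h1
        · by_cases h2 : (¬ G.Adj gs.1 h.1 ∧ ¬ G.Adj gs.1 h.2 ∧ ¬ G.Adj gs.2 h.1 ∧ ¬ G.Adj gs.2 h.2)
          · exact Or.inr (Or.inr ⟨hh, h1, h2⟩)
          · exact Or.inr (Or.inl ⟨hh, h1, h2⟩)
      have hcards2 : MF.card ≤ 1 + dC gs + MF'.card := by
        have h5 := Finset.card_le_card hsplit2
        have h6 := Finset.card_insert_le gs ((MF.filter (fun h => h ≠ gs ∧
          ¬(¬ G.Adj gs.1 h.1 ∧ ¬ G.Adj gs.1 h.2 ∧ ¬ G.Adj gs.2 h.1 ∧ ¬ G.Adj gs.2 h.2))) ∪ MF')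
        have h7 := Finset.card_union_le (MF.filter (fun h => h ≠ gs ∧
          ¬(¬ G.Adj gs.1 h.1 ∧ ¬ G.Adj gs.1 h.2 ∧ ¬ G.Adj gs.2 h.1 ∧ ¬ G.Adj gs.2 h.2))) MF'
        have hdc : (MF.filter (fun h => h ≠ gs ∧
          ¬(¬ G.Adj gs.1 h.1 ∧ ¬ G.Adj gs.1 h.2 ∧ ¬ G.Adj gs.2 h.1 ∧ ¬ G.Adj gs.2 h.2))).card
            = dC gs := rfl
        omega
      have hexp : 4 * gam * (n + 1) ^ 2 + 3 * (n + 1)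
          = 4 * gam * n ^ 2 + 3 * n + (8 * gam * n + 4 * gam + 3) := by ring
      have ht2 : 4 * ((2 * gam - 1) * n) + 1 ≤ 8 * gam * n + 4 * gam + 3 := by
        have h8 : (2 * gam - 1) * n ≤ 2 * gam * n := Nat.mul_le_mul_right n (by omega)
        have h9 : 4 * (2 * gam * n) = 8 * gam * n := by ring
        omega
      have hMF'card : 4 * gam * n ^ 2 + 3 * n ≤ MF'.card := by
        have h10 : 4 * gam * n ^ 2 + 3 * n + (8 * gam * n + 4 * gam + 3) ≤ MF.card := by
          rw [← hexp]
          exact hcard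
        omega
      obtain ⟨S', hS'sub, hS'card, hS'pair⟩ := ih MF'
        (fun p hp => hadj p (hMF'sub hp))
        (fun p hp q hq => hdisj p (hMF'sub hp) q (hMF'sub hq))
        hMF'card
      have hgnotS' : gs ∉ S' := by
        intro hmem
        exact ((Finset.mem_filter.mp (hS'sub hmem)).2.1) rfl
      refine ⟨insert gs S', ?_, ?_, ?_⟩
      · exact Finset.insert_subset hgsMF (hS'sub.trans hMF'sub)
      · rw [Finset.card_insert_of_notMem hgnotS']
        omega
      · intro p hp q hq hpq
        rcases Finset.mem_insert.mp hp with rfl | hpS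
        · rcases Finset.mem_insert.mp hq with rfl | hqS
          · exact absurd rfl hpq
          · exact (Finset.mem_filter.mp (hS'sub hqS)).2.2
        · rcases Finset.mem_insert.mp hq with rfl | hqS
          · have hc := (Finset.mem_filter.mp (hS'sub hpS)).2.2
            exact ⟨fun a => hc.1 a.symm, fun a => hc.2.2.1 a.symm,
              fun a => hc.2.1 a.symm, fun a => hc.2.2.2 a.symm⟩
          · exact hS'pair p hpS q hqS hpq

theorem stmt5 {V : Type*} [Fintype V] (G : SimpleGraph V) (gam k : ℕ)
    (hgam : 1 ≤ gam) (hk : 1 ≤ k)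
    (hwc : WeaklyClosed G gam)
    (hbip : ∃ A : Set V, IsIndepSet G A ∧ IsIndepSet G Aᶜ)
    (M : Set (V × V)) (hM : IsMatchingSet G M)
    (hMcard : 4 * gam * k ^ 2 + 3 * k ≤ M.ncard) :
    ∃ M' : Set (V × V), IsInducedMatchingSet G M' ∧ k ≤ M'.ncard := by
  classical
  obtain ⟨σf, hinj, hclos⟩ := hwc
  obtain ⟨A, hA, hA'⟩ := hbip
  have hfin : M.Finite := Set.toFinite M
  set MF := hfin.toFinset with hMFdef
  have hmem : ∀ p : V × V, p ∈ MF ↔ p ∈ M := fun p => Set.Finite.mem_toFinset hfin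
  have hmc : MF.card = M.ncard := by
    rw [← Set.ncard_coe_finset MF, hMFdef, Set.Finite.coe_toFinset]
  have hcard : 4 * gam * k ^ 2 + 3 * k ≤ MF.card := by
    rw [hmc]
    exact hMcard
  obtain ⟨S, hSsub, hScard, hSpair⟩ := main_ind G gam hgam σf hinj hclos A hA hA' k MF
    (fun p hp => hM.1 p ((hmem p).mp hp))
    (fun p hp q hq => hM.2 p ((hmem p).mp hp) q ((hmem q).mp hq))
    hcard
  refine ⟨(↑S : Set (V × V)), ⟨⟨?_, ?_⟩, ?_⟩, ?_⟩
  · intro p hp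
    exact hM.1 p ((hmem p).mp (hSsub hp))
  · intro p hp q hq hpq
    exact hM.2 p ((hmem p).mp (hSsub hp)) q ((hmem q).mp (hSsub hq)) hpq
  · intro p hp q hq hpq
    exact hSpair p hp q hq hpq
  · rw [Set.ncard_coe_finset]
    exact hScard
end

section
/- Let γ ≥ 1 and k ≥ 1 be integers, let G be a finite simple graph with a closure ordering witnessing that G is weakly γ-closed, and let v be a vertex such that the induced subgraph G[Q(v)] contains a matching with at least 2γk edges. Then G contains an induced matching of size at least k if and only if G − v contains an induced matching of size at least k. -/
open Set

lemma biUnion_ncard_le' {α β : Type*} {t : α → Set β} {c : ℕ} :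
    ∀ {s : Set α}, s.Finite → (∀ a ∈ s, (t a).ncard ≤ c) →
      (⋃ a ∈ s, t a).ncard ≤ s.ncard * c := by
  intro s hs
  refine Set.Finite.induction_on s hs (by simp) ?_
  intro a s ha hsfin ih hc
  rw [Set.biUnion_insert]
  calc (t a ∪ ⋃ x ∈ s, t x).ncard ≤ (t a).ncard + (⋃ x ∈ s, t x).ncard :=
        Set.ncard_union_le _ _
    _ ≤ c + s.ncard * c := by
        have h1 := ih (fun x hx => hc x (Set.mem_insert_of_mem a hx))
        have h2 := hc a (Set.mem_insert a s)
        omega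
    _ = (insert a s).ncard * c := by
        rw [Set.ncard_insert_of_notMem ha hsfin]; ring

lemma induced_subset' {V : Type*} {G : SimpleGraph V} {M M' : Set (V × V)}
    (h : IsInducedMatchingSet G M) (hsub : M' ⊆ M) : IsInducedMatchingSet G M' :=
  ⟨⟨fun p hp => h.1.1 p (hsub hp), fun p hp q hq hne => h.1.2 p (hsub hp) q (hsub hq) hne⟩,
   fun p hp q hq hne => h.2 p (hsub hp) q (hsub hq) hne⟩

lemma neighbors_in_Q_lt' {V : Type*} [Fintype V] {G : SimpleGraph V} {gam : ℕ} {σ : V → ℕ}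
    (hσ : IsClosureOrdering G gam σ) {v x : V} (hxv : x ≠ v) (hnadj : ¬ G.Adj v x) :
    {u | u ∈ Qset G σ v ∧ G.Adj x u}.ncard < gam := by
  rcases le_or_gt (σ v) (σ x) with h | h
  · refine lt_of_le_of_lt (Set.ncard_le_ncard ?_ (Set.toFinite _)) (hσ.2 v x h hxv hnadj)
    rintro u ⟨⟨h1, h2⟩, h3⟩
    exact ⟨h1, h3, h2.le⟩
  · refine lt_of_le_of_lt (Set.ncard_le_ncard ?_ (Set.toFinite _))
      (hσ.2 x v h.le (Ne.symm hxv) (fun h' => hnadj h'.symm))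
    rintro u ⟨⟨h1, h2⟩, h3⟩
    exact ⟨h3, h1, (h.trans h2).le⟩

theorem stmt6 {V : Type*} [Fintype V] (G : SimpleGraph V) (gam k : ℕ)
    (hgam : 1 ≤ gam) (hk : 1 ≤ k)
    (σ : V → ℕ) (hσ : IsClosureOrdering G gam σ) (v : V)
    (hM : ∃ M : Set (V × V), IsMatchingSet G M ∧
      (∀ p ∈ M, p.1 ∈ Qset G σ v ∧ p.2 ∈ Qset G σ v) ∧ 2 * gam * k ≤ M.ncard) :
    (∃ M : Set (V × V), IsInducedMatchingSet G M ∧ k ≤ M.ncard) ↔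
      (∃ M : Set (V × V), IsInducedMatchingSet G M ∧
        (∀ p ∈ M, p.1 ≠ v ∧ p.2 ≠ v) ∧ k ≤ M.ncard) := by
  classical
  constructor
  · rintro ⟨M, hMind, hMk⟩
    obtain ⟨M1, hM1sub, hM1card⟩ := Set.exists_subset_card_eq hMk
    have hM1ind := induced_subset' hMind hM1sub
    by_cases hv : ∃ e ∈ M1, e.1 = v ∨ e.2 = v
    · obtain ⟨e, heM, hev⟩ := hv
      obtain ⟨M0, hM0match, hM0Q, hM0card⟩ := hM
      set M' : Set (V × V) := M1 \ {e} with hM'def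
      have hM'sub : M' ⊆ M1 := Set.diff_subset
      have hM'card : M'.ncard = k - 1 := by
        rw [hM'def, Set.ncard_diff_singleton_of_mem heM, hM1card]
      -- endpoints of M' are ≠ v and nonadjacent to v
      have hkey : ∀ q ∈ M', (q.1 ≠ v ∧ ¬ G.Adj v q.1) ∧ (q.2 ≠ v ∧ ¬ G.Adj v q.2) := by
        intro q hq
        have hqe : e ≠ q := fun h => hq.2 (by simp [h])
        have hd := hM1ind.1.2 e heM q (hM'sub hq) hqe
        have hn := hM1ind.2 e heM q (hM'sub hq) hqe
        rcases hev with h | h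
        · exact ⟨⟨fun hh => hd.1 (h.trans hh.symm), by rw [← h]; exact hn.1⟩,
            ⟨fun hh => hd.2.1 (h.trans hh.symm), by rw [← h]; exact hn.2.1⟩⟩
        · exact ⟨⟨fun hh => hd.2.2.1 (h.trans hh.symm), by rw [← h]; exact hn.2.2.1⟩,
            ⟨fun hh => hd.2.2.2 (h.trans hh.symm), by rw [← h]; exact hn.2.2.2⟩⟩
      set A : V → Set V := fun x => {u | u ∈ Qset G σ v ∧ G.Adj x u} with hAdef
      set BadV : Set V := ⋃ q ∈ M', (A q.1 ∪ A q.2) with hBadVdef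
      have hBadVcard : BadV.ncard ≤ (k - 1) * (2 * (gam - 1)) := by
        rw [← hM'card]
        refine biUnion_ncard_le' M'.toFinite ?_
        intro q hq
        have h1 := neighbors_in_Q_lt' hσ (hkey q hq).1.1 (hkey q hq).1.2
        have h2 := neighbors_in_Q_lt' hσ (hkey q hq).2.1 (hkey q hq).2.2
        calc (A q.1 ∪ A q.2).ncard ≤ (A q.1).ncard + (A q.2).ncard :=
              Set.ncard_union_le _ _
          _ ≤ 2 * (gam - 1) := by
              simp only [hAdef] at *
              omega
      set Bad : Set (V × V) := {p ∈ M0 | p.1 ∈ BadV ∨ p.2 ∈ BadV} with hBaddef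
      have hBadcard : Bad.ncard ≤ BadV.ncard := by
        refine Set.ncard_le_ncard_of_injOn
          (fun p => if p.1 ∈ BadV then p.1 else p.2) ?_ ?_ BadV.toFinite
        · intro p hp
          rcases hp.2 with h | h
          · simp [h]
          · by_cases h1 : p.1 ∈ BadV <;> simp [h1, h]
        · intro p hp q hq hpq
          by_contra hne
          have hd := hM0match.2 p hp.1 q hq.1 hne
          simp only at hpq
          split_ifs at hpq <;> tauto
      have hkg : (k - 1) * (2 * (gam - 1)) < 2 * gam * k := by
        obtain ⟨a, rfl⟩ : ∃ a, k = a + 1 := ⟨k - 1, by omega⟩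
        obtain ⟨b, rfl⟩ : ∃ b, gam = b + 1 := ⟨gam - 1, by omega⟩
        simp only [Nat.add_sub_cancel]
        nlinarith
      have hex : ∃ p ∈ M0, p ∉ Bad := by
        by_contra h
        push_neg at h
        have hsub : M0 ⊆ Bad := fun p hp => h p hp
        have := Set.ncard_le_ncard hsub Bad.toFinite
        omega
      obtain ⟨p, hpM0, hpBad⟩ := hex
      have hpQ := hM0Q p hpM0
      have hp12 : p.1 ∉ BadV ∧ p.2 ∉ BadV := by
        constructor <;> · intro h; exact hpBad ⟨hpM0, by tauto⟩
      have hgood : ∀ q ∈ M',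
          ¬ G.Adj q.1 p.1 ∧ ¬ G.Adj q.2 p.1 ∧ ¬ G.Adj q.1 p.2 ∧ ¬ G.Adj q.2 p.2 := by
        intro q hq
        have h1 : p.1 ∉ A q.1 ∪ A q.2 := fun h =>
          hp12.1 (Set.mem_biUnion hq h)
        have h2 : p.2 ∉ A q.1 ∪ A q.2 := fun h =>
          hp12.2 (Set.mem_biUnion hq h)
        simp only [hAdef, Set.mem_union, Set.mem_setOf_eq, not_or, not_and] at h1 h2
        exact ⟨h1.1 hpQ.1, h1.2 hpQ.1, h2.1 hpQ.2, h2.2 hpQ.2⟩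
      have hppadj : G.Adj p.1 p.2 := hM0match.1 p hpM0
      have hpnotM' : p ∉ M' := fun h => (hgood p h).2.2.1 hppadj
      have hdist : ∀ q ∈ M', p.1 ≠ q.1 ∧ p.1 ≠ q.2 ∧ p.2 ≠ q.1 ∧ p.2 ≠ q.2 := by
        intro q hq
        have hqadj : G.Adj q.1 q.2 := hM1ind.1.1 q (hM'sub hq)
        obtain ⟨g1, g2, g3, g4⟩ := hgood q hq
        refine ⟨?_, ?_, ?_, ?_⟩
        · intro h; exact g2 (h ▸ hqadj.symm)
        · intro h; exact g1 (h ▸ hqadj)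
        · intro h; exact g4 (h ▸ hqadj.symm)
        · intro h; exact g3 (h ▸ hqadj)
      refine ⟨insert p M', ⟨⟨?_, ?_⟩, ?_⟩, ?_, ?_⟩
      · rintro r (rfl | hr)
        · exact hppadj
        · exact hM1ind.1.1 r (hM'sub hr)
      · rintro r (rfl | hr) s (rfl | hs) hne
        · exact absurd rfl hne
        · exact hdist s hs
        · obtain ⟨d1, d2, d3, d4⟩ := hdist r hr
          exact ⟨d1.symm, d3.symm, d2.symm, d4.symm⟩
        · exact hM1ind.1.2 r (hM'sub hr) s (hM'sub hs) hne
      · rintro r (rfl | hr) s (rfl | hs) hne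
        · exact absurd rfl hne
        · obtain ⟨g1, g2, g3, g4⟩ := hgood s hs
          exact ⟨fun h => g1 h.symm, fun h => g2 h.symm, fun h => g3 h.symm,
            fun h => g4 h.symm⟩
        · obtain ⟨g1, g2, g3, g4⟩ := hgood r hr
          exact ⟨g1, g3, g2, g4⟩
        · exact hM1ind.2 r (hM'sub hr) s (hM'sub hs) hne
      · rintro r (rfl | hr)
        · exact ⟨hpQ.1.1.ne', hpQ.2.1.ne'⟩
        · exact ⟨(hkey r hr).1.1, (hkey r hr).2.1⟩
      · rw [Set.ncard_insert_of_notMem hpnotM' M'.toFinite, hM'card]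
        omega
    · push_neg at hv
      exact ⟨M1, hM1ind, hv, hM1card.ge⟩
  · rintro ⟨M, h1, _, h3⟩
    exact ⟨M, h1, h3⟩
end

section
/- Let γ ≥ 1 and k ≥ 1 be integers, and let G be a finite simple graph with a closure ordering witnessing that G is weakly γ-closed such that for every vertex v, every matching in the induced subgraph G[Q(v)] has fewer than 2γk edges. Then every vertex set S ⊆ V(G) with |S| ≥ 4γk² + k² contains an independent set of size k. -/
open Set

lemma matching_decomp {V : Type*} [Fintype V] (G : SimpleGraph V) :
    ∀ n : ℕ, ∀ T : Set V, T.ncard ≤ n → ∃ M : Set (V × V), IsMatchingSet G M ∧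
      (∀ p ∈ M, p.1 ∈ T ∧ p.2 ∈ T) ∧
      IsIndepSet G (T \ (Prod.fst '' M ∪ Prod.snd '' M)) ∧
      T.ncard ≤ (T \ (Prod.fst '' M ∪ Prod.snd '' M)).ncard + 2 * M.ncard := by
  intro n
  induction n with
  | zero =>
      intro T hT
      have hT0 : T = ∅ := (Set.ncard_eq_zero T.toFinite).mp (by omega)
      subst hT0
      refine ⟨∅, ⟨by simp, by simp⟩, by simp, ?_, by simp⟩
      simp [IsIndepSet]
  | succ n ih =>
      intro T hT
      by_cases hind : IsIndepSet G T
      · refine ⟨∅, ⟨by simp, by simp⟩, by simp, ?_, by simp⟩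
        simpa using hind
      · unfold IsIndepSet Set.Pairwise at hind
        push_neg at hind
        obtain ⟨u, hu, w, hw, hne, hadj⟩ := hind
        set T' : Set V := T \ {u, w} with hT'
        have hT'sub : T' ⊆ T := Set.diff_subset
        have hT'card : T'.ncard ≤ n := by
          have h1 : T' ⊆ T \ {u} := by
            intro x hx
            exact ⟨hx.1, fun hxx => hx.2 (by simp_all)⟩
          have h2 : (T \ {u}).ncard < T.ncard :=
            Set.ncard_diff_singleton_lt_of_mem hu T.toFinite
          have h3 : T'.ncard ≤ (T \ {u}).ncard :=
            Set.ncard_le_ncard h1 (T.toFinite.subset Set.diff_subset)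
          omega
        obtain ⟨M', hM'match, hM'mem, hM'ind, hM'card⟩ := ih T' hT'card
        have huT' : u ∉ T' := fun h => h.2 (by simp)
        have hwT' : w ∉ T' := fun h => h.2 (by simp)
        have hnotmem : (u, w) ∉ M' := fun h => huT' (hM'mem _ h).1
        refine ⟨insert (u, w) M', ?_, ?_, ?_, ?_⟩
        · constructor
          · rintro p (rfl | hp)
            · exact hadj
            · exact hM'match.1 p hp
          · rintro p (rfl | hp) q (rfl | hq) hpq
            · exact absurd rfl hpq
            · have h1 := (hM'mem q hq).1
              have h2 := (hM'mem q hq).2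
              refine ⟨fun h => h1.2 (by simp [← h]), fun h => h2.2 (by simp [← h]),
                fun h => h1.2 (by simp [← h]), fun h => h2.2 (by simp [← h])⟩
            · have h1 := (hM'mem p hp).1
              have h2 := (hM'mem p hp).2
              refine ⟨fun h => h1.2 (by simp [h]), fun h => h1.2 (by simp [h]),
                fun h => h2.2 (by simp [h]), fun h => h2.2 (by simp [h])⟩
            · exact hM'match.2 p hp q hq hpq
        · rintro p (rfl | hp)
          · exact ⟨hu, hw⟩
          · exact ⟨hT'sub (hM'mem p hp).1, hT'sub (hM'mem p hp).2⟩
        · have heq : T \ (Prod.fst '' insert (u, w) M' ∪ Prod.snd '' insert (u, w) M')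
              = T' \ (Prod.fst '' M' ∪ Prod.snd '' M') := by
            rw [Set.image_insert_eq, Set.image_insert_eq]
            ext x
            simp only [hT', Set.mem_diff, Set.mem_union, Set.mem_insert_iff,
              Set.mem_singleton_iff]
            tauto
          rw [heq]
          exact hM'ind
        · have heq : T \ (Prod.fst '' insert (u, w) M' ∪ Prod.snd '' insert (u, w) M')
              = T' \ (Prod.fst '' M' ∪ Prod.snd '' M') := by
            rw [Set.image_insert_eq, Set.image_insert_eq]
            ext x
            simp only [hT', Set.mem_diff, Set.mem_union, Set.mem_insert_iff,
              Set.mem_singleton_iff]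
            tauto
          rw [heq, Set.ncard_insert_of_notMem hnotmem]
          have hsub : T ⊆ T' ∪ {u, w} := by
            intro x hx
            by_cases hxu : x ∈ ({u, w} : Set V)
            · exact Or.inr hxu
            · exact Or.inl ⟨hx, hxu⟩
          have h1 : T.ncard ≤ (T' ∪ {u, w}).ncard := Set.ncard_le_ncard hsub (Set.toFinite _)
          have h2 : (T' ∪ {u, w}).ncard ≤ T'.ncard + ({u, w} : Set V).ncard :=
            Set.ncard_union_le _ _
          have h3 : ({u, w} : Set V).ncard ≤ 2 := by
            have := Set.ncard_insert_le u ({w} : Set V)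
            simpa using this
          omega

theorem stmt7_aux {V : Type*} [Fintype V] (G : SimpleGraph V) (gam k : ℕ)
    (hgam : 1 ≤ gam) (hk : 1 ≤ k)
    (σ : V → ℕ) (hσ : Function.Injective σ)
    (hQ : ∀ v : V, ∀ M : Set (V × V), IsMatchingSet G M →
      (∀ p ∈ M, (G.Adj v p.1 ∧ σ v < σ p.1) ∧ (G.Adj v p.2 ∧ σ v < σ p.2)) →
        M.ncard < 2 * gam * k)
    (S : Set V) (hS : 4 * gam * k ^ 2 + k ^ 2 ≤ S.ncard) :
    ∃ I : Set V, I ⊆ S ∧ IsIndepSet G I ∧ I.ncard = k := by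
  set c : ℕ := 4 * gam * k + k with hc
  -- large Q case lemma
  have largeQ : ∀ v : V, ∀ T : Set V,
      (∀ x ∈ T, G.Adj v x ∧ σ v < σ x) → c ≤ T.ncard →
      ∃ I ⊆ T, IsIndepSet G I ∧ k ≤ I.ncard := by
    intro v T hTQ hTcard
    obtain ⟨M, hMmatch, hMmem, hMind, hMcard⟩ := matching_decomp G T.ncard T le_rfl
    have hMsmall : M.ncard < 2 * gam * k := by
      refine hQ v M hMmatch ?_
      intro p hp
      exact ⟨hTQ _ (hMmem p hp).1, hTQ _ (hMmem p hp).2⟩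
    refine ⟨T \ (Prod.fst '' M ∪ Prod.snd '' M), Set.diff_subset, hMind, ?_⟩
    rw [hc] at hTcard
    linarith
  -- greedy lemma
  have greedy : ∀ j : ℕ, j ≤ k → ∀ A : Set V, A ⊆ S →
      j * c + 1 ≤ A.ncard + c →
      ∃ I : Set V, IsIndepSet G I ∧ j ≤ I.ncard ∧ (I ⊆ A ∨ (I ⊆ S ∧ k ≤ I.ncard)) := by
    intro j
    induction j with
    | zero =>
        intro _ A _ _
        exact ⟨∅, by simp [IsIndepSet], by simp, Or.inl (Set.empty_subset _)⟩
    | succ j ih =>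
        intro hjk A hAS hAcard
        have hc1 : 1 ≤ c := hk.trans (hc ▸ Nat.le_add_left k _)
        have hjc : (j + 1) * c = j * c + c := by ring
        have hAne : A.Nonempty := by
          rw [← Set.ncard_pos A.toFinite]
          have h0 : 0 ≤ j * c := Nat.zero_le _
          linarith
        obtain ⟨v, hvA, hvmin⟩ := Set.exists_min_image A σ A.toFinite hAne
        set T : Set V := {x | (G.Adj v x ∧ σ v < σ x) ∧ x ∈ A} with hTdef
        have hTA : T ⊆ A := fun x hx => hx.2
        by_cases hbig : c ≤ T.ncard
        · obtain ⟨I, hIT, hIind, hIk⟩ := largeQ v T (fun x hx => hx.1) hbig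
          exact ⟨I, hIind, le_trans hjk hIk,
            Or.inr ⟨fun x hx => hAS (hTA (hIT hx)), hIk⟩⟩
        · push_neg at hbig
          set A' : Set V := A \ insert v T with hA'def
          have hA'A : A' ⊆ A := Set.diff_subset
          have hA'card : j * c + 1 ≤ A'.ncard + c := by
            have hsub : A ⊆ A' ∪ insert v T := by
              intro x hx
              by_cases hxm : x ∈ insert v T
              · exact Or.inr hxm
              · exact Or.inl ⟨hx, hxm⟩
            have h1 : A.ncard ≤ A'.ncard + (insert v T).ncard :=
              le_trans (Set.ncard_le_ncard hsub (Set.toFinite _)) (Set.ncard_union_le _ _)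
            have h2 : (insert v T).ncard ≤ T.ncard + 1 := Set.ncard_insert_le _ _
            linarith
          obtain ⟨I', hI'ind, hI'card, hI'loc⟩ := ih (le_trans (Nat.le_succ j) hjk) A' (fun x hx => hAS (hA'A hx)) hA'card
          rcases hI'loc with hI'A' | hI'S
          · -- insert v
            have hvnadj : ∀ b ∈ I', ¬ G.Adj v b := by
              intro b hb hadj
              have hbA : b ∈ A := hA'A (hI'A' hb)
              have hble : σ v ≤ σ b := hvmin b hbA
              have hbne : σ v ≠ σ b := fun h => (G.ne_of_adj hadj) (hσ h)
              have : b ∈ T := ⟨⟨hadj, lt_of_le_of_ne hble hbne⟩, hbA⟩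
              exact (hI'A' hb).2 (Set.mem_insert_iff.mpr (Or.inr this))
            have hvI' : v ∉ I' := fun h => (hI'A' h).2 (Set.mem_insert _ _)
            refine ⟨insert v I', ?_, ?_, Or.inl ?_⟩
            · show (insert v I').Pairwise (fun u v => ¬ G.Adj u v)
              rw [Set.pairwise_insert]
              exact ⟨hI'ind, fun b hb _ => ⟨hvnadj b hb, fun h => hvnadj b hb (G.adj_symm h)⟩⟩
            · rw [Set.ncard_insert_of_notMem hvI']
              omega
            · intro x hx
              rcases hx with rfl | hx
              · exact hvA
              · exact hA'A (hI'A' hx)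
          · exact ⟨I', hI'ind, le_trans hjk hI'S.2, Or.inr hI'S⟩
  have hkc : k * c ≤ S.ncard := by
    have h : k * c = 4 * gam * k ^ 2 + k ^ 2 := by rw [hc]; ring
    linarith
  have hc1 : 1 ≤ c := hk.trans (hc ▸ Nat.le_add_left k _)
  obtain ⟨I, hIind, hIk, hIloc⟩ := greedy k le_rfl S le_rfl (by linarith)
  have hIS : I ⊆ S := by rcases hIloc with h | h; exact h; exact h.1
  obtain ⟨I', hI'I, hI'card⟩ := Set.exists_subset_card_eq hIk
  exact ⟨I', fun x hx => hIS (hI'I hx), hIind.mono hI'I, hI'card⟩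

theorem stmt7 {V : Type*} [Fintype V] (G : SimpleGraph V) (gam k : ℕ)
    (hgam : 1 ≤ gam) (hk : 1 ≤ k)
    (σ : V → ℕ) (hσ : IsClosureOrdering G gam σ)
    (hQ : ∀ v : V, ∀ M : Set (V × V), IsMatchingSet G M →
      (∀ p ∈ M, p.1 ∈ Qset G σ v ∧ p.2 ∈ Qset G σ v) → M.ncard < 2 * gam * k)
    (S : Set V) (hS : 4 * gam * k ^ 2 + k ^ 2 ≤ S.ncard) :
    ∃ I : Set V, I ⊆ S ∧ IsIndepSet G I ∧ I.ncard = k :=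
  stmt7_aux G gam k hgam hk σ hσ.1
    (fun v M hM hmem => hQ v M hM (fun p hp => hmem p hp)) S hS
end

section
/- Let γ ≥ 1 and ω ≥ 1 be integers and let G be a weakly γ-closed finite simple graph containing no clique of size ω + 1. Then, with ρ := γ + ω + 1, the graph G contains no K_{ρ,ρ} as a subgraph; that is, there are no two disjoint vertex sets U, W ⊆ V(G), each of size ρ, such that every vertex of U is adjacent to every vertex of W. -/
open Set

lemma step_lemma {V : Type*} [Fintype V] (G : SimpleGraph V) (gam : ℕ) (σ : V → ℕ)
    (hσ : IsClosureOrdering G gam σ) (U W : Set V) (hd : Disjoint U W)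
    (hbi : ∀ u ∈ U, ∀ w ∈ W, G.Adj u w) (hU : gam + 1 ≤ U.ncard) (hW : gam ≤ W.ncard)
    (v : V) (hv : v ∈ U) (hmin : ∀ x ∈ U ∪ W, σ v ≤ σ x) :
    ∀ x ∈ U ∪ W, x ≠ v → G.Adj v x := by
  obtain ⟨hinj, hclo⟩ := hσ
  have hstage1 : ∀ u ∈ U, u ≠ v → G.Adj v u := by
    intro u hu hne
    by_contra hadj
    have hlt := hclo v u (hmin u (Or.inl hu)) hne hadj
    have hsub : W ⊆ {x | G.Adj v x ∧ G.Adj u x ∧ σ v ≤ σ x} := by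
      intro w hw
      exact ⟨hbi v hv w hw, hbi u hu w hw, hmin w (Or.inr hw)⟩
    have := Set.ncard_le_ncard hsub (Set.toFinite _)
    omega
  intro x hx hne
  rcases hx with hxU | hxW
  · exact hstage1 x hxU hne
  · by_contra hadj
    have hlt := hclo v x (hmin x (Or.inr hxW)) hne hadj
    have hsub : U \ {v} ⊆ {y | G.Adj v y ∧ G.Adj x y ∧ σ v ≤ σ y} := by
      rintro u ⟨hu, hune⟩
      exact ⟨hstage1 u hu (by simpa using hune), (hbi u hu x hxW).symm, hmin u (Or.inl hu)⟩
    have h1 := Set.ncard_diff_singleton_of_mem hv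
    have := Set.ncard_le_ncard hsub (Set.toFinite _)
    omega

lemma clique_lemma {V : Type*} [Fintype V] (G : SimpleGraph V) (gam : ℕ) (σ : V → ℕ)
    (hσ : IsClosureOrdering G gam σ) :
    ∀ m : ℕ, ∀ U W : Set V, Disjoint U W → (∀ u ∈ U, ∀ w ∈ W, G.Adj u w) →
      gam + m ≤ U.ncard → gam + m ≤ W.ncard →
      ∃ t : Finset V, G.IsClique (t : Set V) ∧ t.card = m ∧ (t : Set V) ⊆ U ∪ W := by
  classical
  intro m
  induction m with
  | zero =>
    intro U W _ _ _ _
    exact ⟨∅, by simp [SimpleGraph.IsClique], rfl, by simp⟩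
  | succ m ih =>
    intro U W hd hbi hU hW
    have hne : (U ∪ W).Nonempty := by
      have hUne : U.Nonempty := Set.nonempty_of_ncard_ne_zero (by omega)
      exact hUne.mono Set.subset_union_left
    obtain ⟨v, hv, hmin⟩ := Set.exists_min_image (U ∪ W) σ (Set.toFinite _) hne
    rcases hv with hvU | hvW
    · have hadj := step_lemma G gam σ hσ U W hd hbi (by omega) (by omega) v hvU hmin
      have hcard := Set.ncard_diff_singleton_of_mem hvU
      obtain ⟨t, ht1, ht2, ht3⟩ := ih (U \ {v}) W (hd.mono_left Set.diff_subset)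
        (fun u hu w hw => hbi u hu.1 w hw) (by omega) (by omega)
      have hvt : v ∉ t := by
        intro hvt
        rcases ht3 hvt with h | h
        · exact h.2 rfl
        · exact Set.disjoint_left.mp hd hvU h
      refine ⟨insert v t, ?_, ?_, ?_⟩
      · rw [Finset.coe_insert]
        refine ht1.insert fun b hb hbne => hadj b ?_ hbne.symm
        rcases ht3 hb with h | h
        · exact Or.inl h.1
        · exact Or.inr h
      · rw [Finset.card_insert_of_notMem hvt, ht2]
      · rw [Finset.coe_insert]
        rintro x (rfl | hx)
        · exact Or.inl hvU
        · rcases ht3 hx with h | h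
          · exact Or.inl h.1
          · exact Or.inr h
    · have hmin' : ∀ x ∈ W ∪ U, σ v ≤ σ x := by
        intro x hx
        exact hmin x (by rw [Set.union_comm]; exact hx)
      have hadj := step_lemma G gam σ hσ W U hd.symm
        (fun w hw u hu => (hbi u hu w hw).symm) (by omega) (by omega) v hvW hmin'
      have hcard := Set.ncard_diff_singleton_of_mem hvW
      obtain ⟨t, ht1, ht2, ht3⟩ := ih U (W \ {v}) (hd.mono_right Set.diff_subset)
        (fun u hu w hw => hbi u hu w hw.1) (by omega) (by omega)
      have hvt : v ∉ t := by
        intro hvt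
        rcases ht3 hvt with h | h
        · exact Set.disjoint_left.mp hd h hvW
        · exact h.2 rfl
      refine ⟨insert v t, ?_, ?_, ?_⟩
      · rw [Finset.coe_insert]
        refine ht1.insert fun b hb hbne => hadj b ?_ hbne.symm
        rcases ht3 hb with h | h
        · exact Or.inr h
        · exact Or.inl h.1
      · rw [Finset.card_insert_of_notMem hvt, ht2]
      · rw [Finset.coe_insert]
        rintro x (rfl | hx)
        · exact Or.inr hvW
        · rcases ht3 hx with h | h
          · exact Or.inl h
          · exact Or.inr h.1

theorem stmt9 {V : Type*} [Fintype V] (G : SimpleGraph V) (gam om : ℕ)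
    (hgam : 1 ≤ gam) (hom : 1 ≤ om)
    (hwc : WeaklyClosed G gam)
    (hclique : ∀ s : Set V, G.IsClique s → s.ncard ≠ om + 1) :
    ¬ ∃ U W : Set V, Disjoint U W ∧ U.ncard = gam + om + 1 ∧ W.ncard = gam + om + 1 ∧
      ∀ u ∈ U, ∀ w ∈ W, G.Adj u w := by
  rintro ⟨U, W, hd, hU, hW, hbi⟩
  obtain ⟨σ, hσ⟩ := hwc
  obtain ⟨t, ht1, ht2, -⟩ := clique_lemma G gam σ hσ (om + 1) U W hd hbi (by omega) (by omega)
  exact hclique (↑t) ht1 (by rw [Set.ncard_coe_finset, ht2])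
end

section
/- There is an absolute constant C > 0 such that for all integers γ ≥ 1, a ≥ 1, and b ≥ 1, every weakly γ-closed finite simple graph on at least (a + b)^{γ + C} vertices contains a clique of size a or an independent set of size b. -/
open Set

lemma key_aux {V : Type} [DecidableEq V] (G : SimpleGraph V) [DecidableRel G.Adj]
    (σ : V → ℕ) :
    ∀ (n gam a b : ℕ) (S : Finset V), gam + a + b ≤ n →
    (∀ u ∈ S, ∀ w ∈ S, σ u ≤ σ w → w ≠ u → ¬ G.Adj u w →
      (S.filter fun x => G.Adj u x ∧ G.Adj w x ∧ σ u ≤ σ x).card < gam) →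
    a * (b + 1) ^ gam ≤ S.card →
    (∃ s : Finset V, s ⊆ S ∧ G.IsClique (↑s : Set V) ∧ s.card = a) ∨
      (∃ s : Finset V, s ⊆ S ∧ IsIndepSet G (↑s : Set V) ∧ s.card = b) := by
  intro n
  induction n with
  | zero =>
    intro gam a b S hn hclos hcard
    have ha : a = 0 := by omega
    exact Or.inl ⟨∅, Finset.empty_subset _, by simp, by simp [ha]⟩
  | succ n ih =>
    intro gam a b S hn hclos hcard
    rcases Nat.eq_zero_or_pos a with ha | ha
    · exact Or.inl ⟨∅, Finset.empty_subset _, by simp, by simp [ha]⟩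
    rcases Nat.eq_zero_or_pos b with hb | hb
    · refine Or.inr ⟨∅, Finset.empty_subset _, ?_, by simp [hb]⟩
      simp [IsIndepSet]
    rcases Nat.eq_zero_or_pos gam with hg | hg
    · -- S is a clique
      have hSclique : G.IsClique (↑S : Set V) := by
        intro u hu w hw hne
        by_contra hadj
        rcases le_total (σ u) (σ w) with hle | hle
        · have := hclos u hu w hw hle (Ne.symm hne) hadj
          omega
        · have := hclos w hw u hu hle hne (fun h => hadj h.symm)
          omega
      have haS : a ≤ S.card := by
        have : a * (b + 1) ^ gam = a := by simp [hg]
        omega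
      obtain ⟨t, htS, htcard⟩ := Finset.exists_subset_card_eq haS
      exact Or.inl ⟨t, htS, hSclique.subset (Finset.coe_subset.mpr htS), htcard⟩
    -- main case: gam ≥ 1, a ≥ 1, b ≥ 1
    obtain ⟨g, rfl⟩ : ∃ g, gam = g + 1 := ⟨gam - 1, by omega⟩
    obtain ⟨a', rfl⟩ : ∃ a', a = a' + 1 := ⟨a - 1, by omega⟩
    obtain ⟨b', rfl⟩ : ∃ b', b = b' + 1 := ⟨b - 1, by omega⟩
    have hSne : S.Nonempty := by
      rw [← Finset.card_pos]
      have : 0 < (a' + 1) * (b' + 1 + 1) ^ (g + 1) := by positivity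
      omega
    obtain ⟨y, hyS, hymax⟩ := S.exists_max_image σ hSne
    set W : Finset V := (S.erase y).filter (fun w => ¬ G.Adj y w) with hW
    set N : Finset V := (S.erase y).filter (fun w => G.Adj y w) with hN
    have hWS : W ⊆ S := (Finset.filter_subset _ _).trans (Finset.erase_subset _ _)
    have hNS : N ⊆ S := (Finset.filter_subset _ _).trans (Finset.erase_subset _ _)
    have hcardsplit : N.card + W.card = S.card - 1 := by
      have h1 : N.card + W.card = (S.erase y).card := Finset.card_filter_add_card_filter_not _
      rw [h1, Finset.card_erase_of_mem hyS]
    by_cases hWbig : (a' + 1) * (b' + 1) ^ (g + 1) ≤ W.card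
    · -- recurse on W with b-1
      have hWclos : ∀ u ∈ W, ∀ w ∈ W, σ u ≤ σ w → w ≠ u → ¬ G.Adj u w →
          (W.filter fun x => G.Adj u x ∧ G.Adj w x ∧ σ u ≤ σ x).card < g + 1 := by
        intro u hu w hw hle hne hadj
        calc (W.filter fun x => G.Adj u x ∧ G.Adj w x ∧ σ u ≤ σ x).card
            ≤ (S.filter fun x => G.Adj u x ∧ G.Adj w x ∧ σ u ≤ σ x).card :=
              Finset.card_le_card (Finset.filter_subset_filter _ hWS)
          _ < g + 1 := hclos u (hWS hu) w (hWS hw) hle hne hadj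
      rcases ih (g + 1) (a' + 1) b' W (by omega) hWclos hWbig with ⟨s, hsW, hs1, hs2⟩ | ⟨s, hsW, hs1, hs2⟩
      · exact Or.inl ⟨s, hsW.trans hWS, hs1, hs2⟩
      · -- insert y into independent set
        have hysW : y ∉ s := fun h => (Finset.mem_erase.mp (Finset.mem_of_mem_filter _ (hsW h))).1 rfl
        refine Or.inr ⟨insert y s, ?_, ?_, ?_⟩
        · exact Finset.insert_subset hyS (hsW.trans hWS)
        · rw [Finset.coe_insert]
          have hsym : Symmetric (fun u v : V => ¬ G.Adj u v) := fun u v h h' => h h'.symm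
          show (insert y (↑s : Set V)).Pairwise fun u v => ¬ G.Adj u v
          rw [haveI : Std.Symm (fun u v : V => ¬ G.Adj u v) := ⟨fun _ _ h => hsym h⟩; Set.pairwise_insert_of_symm]
          refine ⟨hs1, fun w hws _ => ?_⟩
          have hwW : w ∈ W := hsW hws
          exact (Finset.mem_filter.mp hwW).2
        · rw [Finset.card_insert_of_notMem hysW, hs2]
    · -- recurse on N with gam-1, a-1
      push_neg at hWbig
      have hNbig : a' * (b' + 1 + 1) ^ g ≤ N.card := by
        have hpow1 : (b' + 1) ^ (g + 1) ≤ (b' + 1) * (b' + 1 + 1) ^ g := by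
          rw [pow_succ']
          exact Nat.mul_le_mul_left _ (Nat.pow_le_pow_left (by omega) g)
        have hpow2 : 1 ≤ (b' + 1 + 1) ^ g := Nat.one_le_pow _ _ (by omega)
        have hexp : (a' + 1) * (b' + 1 + 1) ^ (g + 1)
            = (a' + 1) * (b' + 1) * (b' + 1 + 1) ^ g + (a' + 1) * (b' + 1 + 1) ^ g := by
          ring
        have h3 : (a' + 1) * (b' + 1) ^ (g + 1) ≤ (a' + 1) * ((b' + 1) * (b' + 1 + 1) ^ g) :=
          Nat.mul_le_mul_left _ hpow1
        have hS1 : 1 ≤ S.card := Finset.card_pos.mpr hSne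
        have hsplit' : S.card = N.card + W.card + 1 := by omega
        nlinarith [h3, hexp, hpow2, hcard, hsplit', hWbig]
      have hNclos : ∀ u ∈ N, ∀ w ∈ N, σ u ≤ σ w → w ≠ u → ¬ G.Adj u w →
          (N.filter fun x => G.Adj u x ∧ G.Adj w x ∧ σ u ≤ σ x).card < g := by
        intro u hu w hw hle hne hadj
        set T' := N.filter fun x => G.Adj u x ∧ G.Adj w x ∧ σ u ≤ σ x with hT'
        have hyT' : y ∉ T' := fun h =>
          (Finset.mem_erase.mp (Finset.mem_of_mem_filter _ (Finset.mem_of_mem_filter _ h))).1 rfl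
        have hins : insert y T' ⊆ S.filter fun x => G.Adj u x ∧ G.Adj w x ∧ σ u ≤ σ x := by
          intro x hx
          rcases Finset.mem_insert.mp hx with rfl | hx
          · refine Finset.mem_filter.mpr ⟨hyS, ?_, ?_, ?_⟩
            · exact ((Finset.mem_filter.mp hu).2).symm
            · exact ((Finset.mem_filter.mp hw).2).symm
            · exact hymax u (hNS hu)
          · exact Finset.mem_filter.mpr ⟨hNS (Finset.mem_of_mem_filter _ hx),
              (Finset.mem_filter.mp hx).2⟩
        have h1 : T'.card + 1 ≤ (S.filter fun x => G.Adj u x ∧ G.Adj w x ∧ σ u ≤ σ x).card := by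
          rw [← Finset.card_insert_of_notMem hyT']
          exact Finset.card_le_card hins
        have h2 := hclos u (hNS hu) w (hNS hw) hle hne hadj
        omega
      rcases ih g a' (b' + 1) N (by omega) hNclos hNbig with ⟨s, hsN, hs1, hs2⟩ | ⟨s, hsN, hs1, hs2⟩
      · -- insert y into clique
        have hysN : y ∉ s := fun h => (Finset.mem_erase.mp (Finset.mem_of_mem_filter _ (hsN h))).1 rfl
        refine Or.inl ⟨insert y s, Finset.insert_subset hyS (hsN.trans hNS), ?_, ?_⟩
        · rw [Finset.coe_insert]
          refine SimpleGraph.IsClique.insert hs1 (fun w hws _ => ?_)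
          exact (Finset.mem_filter.mp (hsN hws)).2
        · rw [Finset.card_insert_of_notMem hysN, hs2]
      · exact Or.inr ⟨s, hsN.trans hNS, hs1, hs2⟩


theorem stmt10 : ∃ C : ℕ, 0 < C ∧
    ∀ (V : Type) [Fintype V] (G : SimpleGraph V) (gam a b : ℕ),
      1 ≤ gam → 1 ≤ a → 1 ≤ b → WeaklyClosed G gam →
      (a + b) ^ (gam + C) ≤ Fintype.card V →
      (∃ s : Set V, G.IsClique s ∧ s.ncard = a) ∨
        (∃ s : Set V, IsIndepSet G s ∧ s.ncard = b) := by
  refine ⟨1, one_pos, ?_⟩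
  intro V _ G gam a b hg ha hb hWC hcard
  classical
  obtain ⟨σ, hinj, hclos⟩ := hWC
  have hclos' : ∀ u ∈ (Finset.univ : Finset V), ∀ w ∈ (Finset.univ : Finset V),
      σ u ≤ σ w → w ≠ u → ¬ G.Adj u w →
      ((Finset.univ : Finset V).filter fun x => G.Adj u x ∧ G.Adj w x ∧ σ u ≤ σ x).card < gam := by
    intro u _ w _ hle hne hadj
    have h := hclos u w hle hne hadj
    have heq : {x : V | G.Adj u x ∧ G.Adj w x ∧ σ u ≤ σ x}.ncard
        = ((Finset.univ : Finset V).filter fun x => G.Adj u x ∧ G.Adj w x ∧ σ u ≤ σ x).card := by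
      rw [Set.ncard_eq_toFinset_card']
      congr 1
      ext x
      simp
    rwa [heq] at h
  have hcard' : a * (b + 1) ^ gam ≤ (Finset.univ : Finset V).card := by
    have h1 : a * (b + 1) ^ gam ≤ (a + b) * (a + b) ^ gam :=
      Nat.mul_le_mul (by omega) (Nat.pow_le_pow_left (by omega) _)
    have h2 : (a + b) * (a + b) ^ gam = (a + b) ^ (gam + 1) := (pow_succ' _ _).symm
    rw [Finset.card_univ]
    omega
  rcases key_aux G σ (gam + a + b) gam a b Finset.univ le_rfl hclos' hcard' with
    ⟨s, _, hs1, hs2⟩ | ⟨s, _, hs1, hs2⟩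
  · exact Or.inl ⟨↑s, hs1, by rw [Set.ncard_coe_finset, hs2]⟩
  · exact Or.inr ⟨↑s, hs1, by rw [Set.ncard_coe_finset, hs2]⟩
end

section
/- Let G be a finite simple graph with no isolated vertices whose vertex set is partitioned into a clique C and an independent set I. If D ⊆ V(G) is a dominating set of G, then there exists a dominating set D' ⊆ C of G with |D'| ≤ |D|. -/
open Set

/-- A dominating set: every vertex is in `D` or adjacent to a vertex of `D`. -/
def IsDominatingSet {V : Type*} (G : SimpleGraph V) (D : Set V) : Prop :=
  ∀ v : V, v ∈ D ∨ ∃ u ∈ D, G.Adj u v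

theorem stmt11 {V : Type*} [Fintype V] (G : SimpleGraph V)
    (hiso : ∀ v : V, ∃ w : V, G.Adj v w)
    (C I : Set V) (hpart : C ∪ I = Set.univ) (hdisj : Disjoint C I)
    (hC : G.IsClique C) (hI : IsIndepSet G I)
    (D : Set V) (hD : IsDominatingSet G D) :
    ∃ D' : Set V, D' ⊆ C ∧ IsDominatingSet G D' ∧ D'.ncard ≤ D.ncard := by
  classical
  choose nbr hnbr using hiso
  -- every neighbor of a vertex of I is in C
  have hIC : ∀ v ∈ I, ∀ w, G.Adj v w → w ∈ C := by
    intro v hv w hw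
    by_contra hwC
    have hwI : w ∈ I := by
      exact (hpart ▸ Set.mem_univ w : w ∈ C ∪ I).resolve_left hwC
    exact hI hv hwI (G.ne_of_adj hw) hw
  set f : V → V := fun v => if v ∈ C then v else nbr v with hf
  have hfC : ∀ v, f v ∈ C := by
    intro v
    by_cases hv : v ∈ C
    · simp [hf, hv]
    · have hvI : v ∈ I := by
        exact (hpart ▸ Set.mem_univ v : v ∈ C ∪ I).resolve_left hv
      simp only [hf, hv, if_false]
      exact hIC v hvI _ (hnbr v)
  refine ⟨f '' D, ?_, ?_, ?_⟩
  · rintro _ ⟨v, _, rfl⟩; exact hfC v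
  · intro u
    rcases hD u with hu | ⟨d, hd, hadj⟩
    · by_cases huC : u ∈ C
      · left; exact ⟨u, hu, by simp [hf, huC]⟩
      · right
        refine ⟨f u, ⟨u, hu, rfl⟩, ?_⟩
        simp only [hf, huC, if_false]
        exact (hnbr u).symm
    · by_cases hdC : d ∈ C
      · right; exact ⟨f d, ⟨d, hd, rfl⟩, by simpa [hf, hdC] using hadj⟩
      · have hdI : d ∈ I := by
          exact (hpart ▸ Set.mem_univ d : d ∈ C ∪ I).resolve_left hdC
        have huC : u ∈ C := hIC d hdI u hadj
        by_cases hne : f d = u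
        · left; exact ⟨d, hd, hne⟩
        · right
          exact ⟨f d, ⟨d, hd, rfl⟩, hC (hfC d) huC hne⟩
  · exact Set.ncard_image_le D.toFinite
end

section
/- Let γ ≥ 1 and let G be a nonempty weakly γ-closed finite simple graph whose vertex set is partitioned into a clique C and an independent set I such that no vertex of I is adjacent to every vertex of C (i.e., C is a maximal clique). If every vertex of G has degree at least γ, then there exists a vertex v ∈ C such that |N(v) ∩ N(w)| < γ for every vertex w with w ≠ v and w ∉ N(v). -/
open Set

theorem stmt12 {V : Type*} [Fintype V] [Nonempty V] (G : SimpleGraph V) (gam : ℕ)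
    (hgam : 1 ≤ gam) (hwc : WeaklyClosed G gam)
    (C I : Set V) (hpart : C ∪ I = Set.univ) (hdisj : Disjoint C I)
    (hC : G.IsClique C) (hI : IsIndepSet G I)
    (hnadj : ∀ v ∈ I, ¬ ∀ u ∈ C, G.Adj v u)
    (hdeg : ∀ v : V, gam ≤ (G.neighborSet v).ncard) :
    ∃ v ∈ C, ∀ w : V, w ≠ v → ¬ G.Adj v w →
      (G.neighborSet v ∩ G.neighborSet w).ncard < gam := by
  obtain ⟨σ, hinj, hσ⟩ := hwc
  obtain ⟨v, hvmin⟩ := Finite.exists_min σ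
  have hset : ∀ w : V, {u : V | G.Adj v u ∧ G.Adj w u ∧ σ v ≤ σ u}
      = G.neighborSet v ∩ G.neighborSet w := by
    intro w
    ext u
    simp only [Set.mem_setOf_eq, Set.mem_inter_iff, SimpleGraph.mem_neighborSet]
    exact ⟨fun h => ⟨h.1, h.2.1⟩, fun h => ⟨h.1, h.2, hvmin u⟩⟩
  have hvC : v ∈ C := by
    by_contra hvC
    have hvI : v ∈ I := by
      have := Set.mem_univ v
      rw [← hpart] at this
      rcases this with h | h
      · exact absurd h hvC
      · exact h
    obtain ⟨u, huC, hun⟩ := by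
      have := hnadj v hvI
      push_neg at this
      exact this
    have huv : u ≠ v := fun h => hdisj.ne_of_mem huC hvI (h ▸ rfl)
    have hlt := hσ v u (hvmin u) huv hun
    rw [hset u] at hlt
    have hsub : G.neighborSet v ⊆ G.neighborSet v ∩ G.neighborSet u := by
      intro x hx
      refine ⟨hx, ?_⟩
      have hxC : x ∈ C := by
        have := Set.mem_univ x
        rw [← hpart] at this
        rcases this with h | h
        · exact h
        · exact absurd hx (by
            have hxv : x ≠ v := fun he => G.irrefl (he ▸ hx)
            exact fun hadj => hI hvI h (Ne.symm hxv) hadj)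
      have hxu : x ≠ u := fun he => hun (he ▸ hx)
      exact hC huC hxC (Ne.symm hxu)
    have := (hdeg v).trans (Set.ncard_le_ncard hsub (Set.toFinite _))
    omega
  refine ⟨v, hvC, fun w hw hnadj' => ?_⟩
  have := hσ v w (hvmin w) hw hnadj'
  rwa [hset w] at this
end

section
/- Let γ ≥ 1 and let G be a weakly γ-closed finite simple graph whose vertex set is partitioned into a clique C and an independent set I such that C is a maximum clique of G, I is a maximum independent set of G, and no vertex of I is adjacent to every vertex of C. Then there exists a closure ordering v_1, …, v_n of G in which every vertex of C appears before every vertex of I. -/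
open Set

theorem stmt13 {V : Type*} [Fintype V] (G : SimpleGraph V) (gam : ℕ)
    (hgam : 1 ≤ gam) (hwc : WeaklyClosed G gam)
    (C I : Set V) (hpart : C ∪ I = Set.univ) (hdisj : Disjoint C I)
    (hC : G.IsClique C) (hI : IsIndepSet G I)
    (hCmax : ∀ s : Set V, G.IsClique s → s.ncard ≤ C.ncard)
    (hImax : ∀ s : Set V, IsIndepSet G s → s.ncard ≤ I.ncard)
    (hnadj : ∀ v ∈ I, ¬ ∀ u ∈ C, G.Adj v u) :
    ∃ σ : V → ℕ, IsClosureOrdering G gam σ ∧ ∀ u ∈ C, ∀ w ∈ I, σ u < σ w := by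
  classical
  obtain ⟨σ₀, hinj₀, hcl₀⟩ := hwc
  set M : ℕ := (Finset.univ.sup σ₀) + 1 with hM
  have hMlt : ∀ u : V, σ₀ u < M := fun u =>
    Nat.lt_succ_of_le (Finset.le_sup (Finset.mem_univ u))
  set σ' : V → ℕ := fun u => if u ∈ C then σ₀ u else σ₀ u + M with hσ'
  have hmem : ∀ u : V, u ∈ C ∨ u ∈ I := by
    intro u
    have : u ∈ C ∪ I := hpart ▸ Set.mem_univ u
    exact this
  have hnotC : ∀ u : V, u ∉ C → u ∈ I := fun u h => (hmem u).resolve_left h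
  have hCI : ∀ u ∈ C, u ∉ I := fun u hu hI' => hdisj.ne_of_mem hu hI' rfl
  have hvalC : ∀ u ∈ C, σ' u = σ₀ u := by intro u hu; simp [hσ', hu]
  have hvalI : ∀ u : V, u ∉ C → σ' u = σ₀ u + M := by intro u hu; simp [hσ', hu]
  have hlt : ∀ u ∈ C, ∀ w : V, w ∉ C → σ' u < σ' w := by
    intro u hu w hw
    rw [hvalC u hu, hvalI w hw]
    calc σ₀ u < M := hMlt u
    _ ≤ σ₀ w + M := Nat.le_add_left _ _
  refine ⟨σ', ⟨?_, ?_⟩, fun u hu w hw => hlt u hu w (fun h => hCI w h hw)⟩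
  · -- injectivity
    intro a b hab
    by_cases ha : a ∈ C <;> by_cases hb : b ∈ C
    · rw [hvalC a ha, hvalC b hb] at hab; exact hinj₀ hab
    · exact absurd hab (Nat.ne_of_lt (hlt a ha b hb))
    · exact absurd hab.symm (Nat.ne_of_lt (hlt b hb a ha))
    · rw [hvalI a ha, hvalI b hb] at hab
      exact hinj₀ (Nat.add_right_cancel hab)
  · intro v w hvw hne hadj
    by_cases hv : v ∈ C <;> by_cases hw : w ∈ C
    · -- both in C: adjacent, contradiction
      exact absurd (hC hv hw (Ne.symm hne)) hadj
    · -- v ∈ C, w ∈ I : key case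
      have hwI := hnotC w hw
      have hsub : {u : V | G.Adj v u ∧ G.Adj w u ∧ σ' v ≤ σ' u} ⊆
          {u : V | G.Adj v u ∧ G.Adj w u ∧ σ₀ v ≤ σ₀ u} := by
        intro u hu
        obtain ⟨h1, h2, h3⟩ := hu
        have huC : u ∈ C := by
          by_contra huC
          exact hI (hnotC u huC) hwI (fun h => G.ne_of_adj h2.symm h) h2.symm
        rw [hvalC v hv, hvalC u huC] at h3
        exact ⟨h1, h2, h3⟩
      have hfin : {u : V | G.Adj v u ∧ G.Adj w u ∧ σ₀ v ≤ σ₀ u}.Finite :=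
        Set.toFinite _
      refine lt_of_le_of_lt (Set.ncard_le_ncard hsub hfin) ?_
      rcases le_or_gt (σ₀ v) (σ₀ w) with h | h
      · exact hcl₀ v w h hne hadj
      · have := hcl₀ w v h.le (Ne.symm hne) (fun h' => hadj h'.symm)
        refine lt_of_le_of_lt (Set.ncard_le_ncard ?_ (Set.toFinite _)) this
        intro u hu
        obtain ⟨h1, h2, h3⟩ := hu
        exact ⟨h2, h1, le_trans h.le h3⟩
    · -- v ∈ I, w ∈ C : impossible since σ' w < σ' v
      exact absurd hvw (Nat.not_le.mpr (hlt w hw v hv))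
    · -- both in I : the set is empty
      have hvI := hnotC v hv
      have : {u : V | G.Adj v u ∧ G.Adj w u ∧ σ' v ≤ σ' u} = ∅ := by
        ext u
        simp only [Set.mem_setOf_eq, Set.mem_empty_iff_false, iff_false]
        rintro ⟨h1, h2, h3⟩
        have huC : u ∈ C := by
          by_contra huC
          exact hI (hnotC u huC) hvI (fun h => G.ne_of_adj h1.symm h) h1.symm
        exact Nat.not_le.mpr (hlt u huC v hv) h3
      rw [this, Set.ncard_empty]
      exact hgam
end

section
/- Let γ ≥ 1 and let G be a finite simple graph with a closure ordering v_1, …, v_n witnessing that G is weakly γ-closed, such that C := {v_1, …, v_m} is a clique and I := {v_{m+1}, …, v_n} is an independent set. Let u ∈ I be a vertex for which there exists an index i ∈ {1, …, m − 1} with v_{i+1} ∉ N(u), and let s_u be the smallest such index. Then |N(u) \ {v_1, …, v_{s_u}}| ≤ γ − 1. -/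
open Set

theorem stmt14 {V : Type*} [Fintype V] (G : SimpleGraph V) (gam : ℕ) (hgam : 1 ≤ gam)
    (σ : V → ℕ) (hσ : IsClosureOrdering G gam σ)
    (C I : Set V) (hpart : C ∪ I = Set.univ) (hdisj : Disjoint C I)
    (hC : G.IsClique C) (hI : IsIndepSet G I)
    (horder : ∀ c ∈ C, ∀ x ∈ I, σ c < σ x)
    (u : V) (hu : u ∈ I)
    (w₀ : V) (hw₀C : w₀ ∈ C) (hw₀adj : ¬ G.Adj u w₀)
    (hw₀pos : ∃ c' ∈ C, σ c' < σ w₀)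
    (hmin : ∀ x ∈ C, ¬ G.Adj u x → (∃ c' ∈ C, σ c' < σ x) → σ w₀ ≤ σ x) :
    {x ∈ G.neighborSet u | σ w₀ ≤ σ x}.ncard ≤ gam - 1 := by
  have huw : u ≠ w₀ := fun h => hdisj.ne_of_mem hw₀C hu h.symm
  have key := hσ.2 w₀ u (le_of_lt (horder w₀ hw₀C u hu)) huw
    (fun h => hw₀adj (h.symm))
  have hsub : {x ∈ G.neighborSet u | σ w₀ ≤ σ x} ⊆
      {t : V | G.Adj w₀ t ∧ G.Adj u t ∧ σ w₀ ≤ σ t} := by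
    rintro x ⟨hx, hle⟩
    have hxC : x ∈ C := by
      rcases (hpart ▸ Set.mem_univ x : x ∈ C ∪ I) with h | h
      · exact h
      · exact absurd hx (hI hu h (G.ne_of_adj hx))
    have hxw : x ≠ w₀ := fun h => hw₀adj (h ▸ hx)
    exact ⟨hC hw₀C hxC (Ne.symm hxw), hx, hle⟩
  have := Set.ncard_le_ncard hsub (Set.toFinite _)
  omega
end

section
/- Let c ≥ 1 and let G be a c-closed finite simple graph. Let S ⊆ V(G) be a set such that every vertex v ∈ V(G) \ S satisfies N(v) ⊆ S and N(v) contains two distinct nonadjacent vertices. Then |V(G) \ S| ≤ (c − 1) · (|S| choose 2). -/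
open Set

/-- A graph is `c`-closed if every pair of distinct nonadjacent vertices has at most
`c - 1` common neighbors. -/
def CClosed {V : Type*} (G : SimpleGraph V) (c : ℕ) : Prop :=
  ∀ u v : V, u ≠ v → ¬ G.Adj u v →
    (G.neighborSet u ∩ G.neighborSet v).ncard ≤ c - 1

theorem stmt15 {V : Type*} [Fintype V] (G : SimpleGraph V) (c : ℕ) (hc : 1 ≤ c)
    (hcc : CClosed G c) (S : Set V)
    (hS : ∀ v ∈ Sᶜ, G.neighborSet v ⊆ S ∧
      ∃ a ∈ G.neighborSet v, ∃ b ∈ G.neighborSet v, a ≠ b ∧ ¬ G.Adj a b) :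
    (Sᶜ : Set V).ncard ≤ (c - 1) * (S.ncard).choose 2 := by
    classical
  choose hsub a ha b hb hab hnadj using hS
  set s : Finset V := (Sᶜ : Set V).toFinset with hs
  set f : V → Finset V := fun v => if h : v ∈ Sᶜ then {a v h, b v h} else ∅ with hf
  have hfi : ∀ v (h : v ∈ Sᶜ), f v = {a v h, b v h} := fun v h => dif_pos h
  have key : s.card ≤ (c - 1) * (s.image f).card := by
    apply Finset.card_le_mul_card_image
    intro p hp
    obtain ⟨v0, hv0, hv0p⟩ := Finset.mem_image.mp hp
    have hv0' : v0 ∈ Sᶜ := by simpa [hs] using hv0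
    set a0 := a v0 hv0' with ha0
    set b0 := b v0 hv0' with hb0
    have hfilter : ((s.filter fun x => f x = p) : Set V) ⊆
        G.neighborSet a0 ∩ G.neighborSet b0 := by
      intro w hw
      simp only [Finset.coe_filter, Set.mem_setOf_eq] at hw
      obtain ⟨hws, hwp⟩ := hw
      have hw' : w ∈ Sᶜ := by simpa [hs] using hws
      have heq : ({a w hw', b w hw'} : Finset V) = {a0, b0} := by
        rw [← hfi w hw', hwp, ← hv0p, hfi v0 hv0']
      have hmem : ∀ x, x ∈ ({a0, b0} : Finset V) → G.Adj x w := by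
        intro x hx
        rw [← heq] at hx
        rcases Finset.mem_insert.mp hx with h | h
        · subst h
          exact ((SimpleGraph.mem_neighborSet _ _ _).mp (ha w hw')).symm
        · rw [Finset.mem_singleton] at h
          subst h
          exact ((SimpleGraph.mem_neighborSet _ _ _).mp (hb w hw')).symm
      exact ⟨hmem a0 (by simp), hmem b0 (by simp)⟩
    have h2 := hcc a0 b0 (hab v0 hv0') (hnadj v0 hv0')
    calc (s.filter fun x => f x = p).card
        = (((s.filter fun x => f x = p) : Finset V) : Set V).ncard := by
          rw [Set.ncard_coe_finset]
      _ ≤ (G.neighborSet a0 ∩ G.neighborSet b0).ncard :=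
          Set.ncard_le_ncard hfilter (Set.toFinite _)
      _ ≤ c - 1 := h2
  have himg : s.image f ⊆ S.toFinset.powersetCard 2 := by
    intro p hp
    obtain ⟨v, hv, rfl⟩ := Finset.mem_image.mp hp
    have hv' : v ∈ Sᶜ := by simpa [hs] using hv
    rw [hfi v hv', Finset.mem_powersetCard]
    constructor
    · intro x hx
      rcases Finset.mem_insert.mp hx with h | h
      · subst h; exact Set.mem_toFinset.mpr (hsub v hv' (ha v hv'))
      · rw [Finset.mem_singleton] at h
        subst h; exact Set.mem_toFinset.mpr (hsub v hv' (hb v hv'))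
    · rw [Finset.card_insert_of_notMem (by simp [hab v hv']), Finset.card_singleton]
  have h3 : (s.image f).card ≤ (S.ncard).choose 2 := by
    calc (s.image f).card ≤ (S.toFinset.powersetCard 2).card := Finset.card_le_card himg
      _ = (S.toFinset.card).choose 2 := Finset.card_powersetCard 2 _
      _ = (S.ncard).choose 2 := by rw [Set.ncard_eq_toFinset_card']
  calc (Sᶜ : Set V).ncard = s.card := (Set.ncard_eq_toFinset_card' _)
    _ ≤ (c - 1) * (s.image f).card := key
    _ ≤ (c - 1) * (S.ncard).choose 2 := Nat.mul_le_mul_left _ h3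
end

section
/- Let G be a connected finite simple graph with |V(G)| ≥ 3, let R ⊆ V(G) be a set of red vertices, and let k ∈ ℕ. Assume G has no annotated connected vertex cover (with respect to R) of size at most 1. Let v be a simplicial vertex of G, i.e., N(v) is a clique. Set k' := k − 1 if v ∈ R and k' := k otherwise, and set R' := (R \ {v}) ∪ N(v) if v ∉ R or deg(v) = 1, and R' := R \ {v} otherwise. Then G has an annotated connected vertex cover of size at most k with respect to R if and only if G − v has an annotated connected vertex cover of size at most k' with respect to R'. -/
open Set

/-- An annotated connected vertex cover of `G` with respect to the red set `R`:
a set `S` containing `R` that covers every edge of `G` and induces a connected subgraph. -/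
def IsACVC {V : Type*} (G : SimpleGraph V) (R S : Set V) : Prop :=
  R ⊆ S ∧ (∀ ⦃a b : V⦄, G.Adj a b → a ∈ S ∨ b ∈ S) ∧ (G.induce S).Connected


lemma reach_avoid {V : Type*} (G : SimpleGraph V) (S : Set V) (v : V)
    (hsimp : G.IsClique (G.neighborSet v)) :
    ∀ (n : ℕ) (x y : ↥S) (p : (G.induce S).Walk x y), p.length ≤ n →
      ∀ (hx : x.val ≠ v) (hy : y.val ≠ v),
      (G.induce (S \ {v})).Reachable ⟨x.val, ⟨x.2, hx⟩⟩ ⟨y.val, ⟨y.2, hy⟩⟩ := by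
  intro n
  induction n with
  | zero =>
    intro x y p hlen hx hy
    cases p with
    | nil => exact SimpleGraph.Reachable.refl _
    | cons h q => simp [SimpleGraph.Walk.length_cons] at hlen
  | succ n ih =>
    intro x y p hlen hx hy
    cases p with
    | nil => exact SimpleGraph.Reachable.refl _
    | @cons _ c _ h q =>
      by_cases hc : c.val = v
      · cases q with
        | nil => exact absurd hc hy
        | @cons _ d _ h' q' =>
          have hxv : (x : V) ∈ G.neighborSet v := by
            have : G.Adj x.val c.val := h
            rw [hc] at this
            exact this.symm
          have hdv : (d : V) ∈ G.neighborSet v := by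
            have : G.Adj c.val d.val := h'
            rw [hc] at this
            exact this
          have hdnv : d.val ≠ v := fun hh => G.irrefl (show G.Adj v v from hh ▸ hdv)
          by_cases hdx : d = x
          · subst hdx
            exact ih d y q' (by
              simp [SimpleGraph.Walk.length_cons] at hlen; omega) hx hy
          · have hadj : G.Adj x.val d.val :=
              hsimp hxv hdv (fun hh => hdx (Subtype.ext hh.symm))
            have : (G.induce S).Adj x d := hadj
            exact ih x y (SimpleGraph.Walk.cons this q') (by
              simp [SimpleGraph.Walk.length_cons] at hlen ⊢; omega) hx hy
      · have hstep : (G.induce (S \ {v})).Adj ⟨x.val, ⟨x.2, hx⟩⟩ ⟨c.val, ⟨c.2, hc⟩⟩ := by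
          exact (h : G.Adj x.val c.val)
        exact hstep.reachable.trans
          (ih c y q (by simp [SimpleGraph.Walk.length_cons] at hlen; omega) hc hy)

lemma induce_sdiff_connected {V : Type*} (G : SimpleGraph V) {S : Set V} {v : V}
    (hsimp : G.IsClique (G.neighborSet v)) (hc : (G.induce S).Connected)
    (hne : (S \ {v}).Nonempty) : (G.induce (S \ {v})).Connected := by
  rw [SimpleGraph.connected_iff]
  refine ⟨?_, hne.coe_sort⟩
  rintro ⟨x, hxS, hxv⟩ ⟨y, hyS, hyv⟩
  obtain ⟨p⟩ := hc.preconnected ⟨x, hxS⟩ ⟨y, hyS⟩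
  exact reach_avoid G S v hsimp p.length _ _ p le_rfl
    (by simpa using hxv) (by simpa using hyv)

lemma induce_insert_connected {V : Type*} (G : SimpleGraph V) {S : Set V} {u w : V}
    (hc : (G.induce S).Connected) (hw : w ∈ S) (hadj : G.Adj u w) :
    (G.induce (insert u S)).Connected := by
  have h1 : (G.induce ({u, w} ∪ S)).Connected :=
    SimpleGraph.induce_union_connected (SimpleGraph.induce_pair_connected_of_adj hadj).preconnected hc.preconnected
      ⟨w, by simp, hw⟩
  have h2 : ({u, w} : Set V) ∪ S = insert u S := by
    rw [Set.insert_union, Set.union_eq_self_of_subset_left (Set.singleton_subset_iff.mpr hw)]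
  rwa [h2] at h1

lemma exists_adj_mem {V : Type*} (G : SimpleGraph V) {S : Set V} {v y : V}
    (hc : (G.induce S).Connected) (hv : v ∈ S) (hy : y ∈ S) (hne : y ≠ v) :
    ∃ w ∈ S, w ≠ v ∧ G.Adj v w := by
  obtain ⟨p⟩ := hc.preconnected ⟨v, hv⟩ ⟨y, hy⟩
  cases p with
  | nil => exact absurd rfl hne
  | @cons _ c _ h q =>
    have : G.Adj v c.val := h
    exact ⟨c.val, c.2, fun hh => G.irrefl (show G.Adj v v from hh ▸ this), this⟩

theorem stmt16 {V : Type*} [Fintype V] (G : SimpleGraph V)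
    (hconn : G.Connected) (hcard : 3 ≤ Fintype.card V)
    (R : Set V) (k : ℕ)
    (hno1 : ¬ ∃ S : Set V, IsACVC G R S ∧ S.ncard ≤ 1)
    (v : V) (hsimp : G.IsClique (G.neighborSet v))
    (k' : ℕ) (hk'mem : v ∈ R → k' = k - 1) (hk'nmem : v ∉ R → k' = k)
    (R' : Set V)
    (hR'yes : (v ∉ R ∨ (G.neighborSet v).ncard = 1) →
      R' = (R \ {v}) ∪ G.neighborSet v)
    (hR'no : (v ∈ R ∧ (G.neighborSet v).ncard ≠ 1) → R' = R \ {v}) :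
    (∃ S : Set V, IsACVC G R S ∧ S.ncard ≤ k) ↔
      (∃ S : Set V, v ∉ S ∧ R' ⊆ S ∧
        (∀ a b : V, G.Adj a b → a ≠ v → b ≠ v → a ∈ S ∨ b ∈ S) ∧
        (G.induce S).Connected ∧ S.ncard ≤ k') := by
  classical
  have hvadj : ∃ u, G.Adj v u := by
    obtain ⟨w, hw⟩ := Fintype.exists_ne_of_one_lt_card (by omega) v
    obtain ⟨p⟩ := hconn.preconnected v w
    cases p with
    | nil => exact absurd rfl hw
    | cons h q => exact ⟨_, h⟩
  constructor
  · rintro ⟨S, ⟨hRS, hcov, hSconn⟩, hScard⟩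
    have hS2 : 2 ≤ S.ncard := by
      by_contra hh
      exact hno1 ⟨S, ⟨hRS, hcov, hSconn⟩, by omega⟩
    by_cases hvS : v ∈ S
    · -- v ∈ S
      have hSd : (S \ {v}).Nonempty := by
        obtain ⟨a, b, haS, hbS, hab⟩ :=
          (Set.one_lt_ncard_iff (Set.toFinite S)).mp (by omega)
        rcases eq_or_ne a v with rfl | ha
        · exact ⟨b, hbS, hab.symm⟩
        · exact ⟨a, haS, ha⟩
      obtain ⟨y, hyS, hyv⟩ := hSd
      obtain ⟨w, hwS, hwv, hvw⟩ := exists_adj_mem G hSconn hvS hyS hyv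
      have hconnd : (G.induce (S \ {v})).Connected :=
        induce_sdiff_connected G hsimp hSconn ⟨y, hyS, hyv⟩
      have hScd : (S \ {v}).ncard = S.ncard - 1 :=
        Set.ncard_diff_singleton_of_mem hvS
      have hcov' : ∀ a b : V, G.Adj a b → a ≠ v → b ≠ v →
          a ∈ S \ {v} ∨ b ∈ S \ {v} := fun a b hab ha hb =>
        (hcov hab).imp (fun h => ⟨h, ha⟩) (fun h => ⟨h, hb⟩)
      have hvnotd : v ∉ S \ {v} := fun h => h.2 rfl
      by_cases hvR : v ∈ R
      · -- v ∈ R : use S \ {v}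
        refine ⟨S \ {v}, hvnotd, ?_, hcov', hconnd, ?_⟩
        · have hRd : R \ {v} ⊆ S \ {v} := fun x hx => ⟨hRS hx.1, hx.2⟩
          by_cases hdeg : (G.neighborSet v).ncard = 1
          · rw [hR'yes (Or.inr hdeg)]
            refine Set.union_subset hRd ?_
            obtain ⟨a, hNa⟩ := Set.ncard_eq_one.mp hdeg
            have hwa : w = a := by
              have : w ∈ G.neighborSet v := hvw
              rwa [hNa] at this
            intro x hx
            rw [hNa] at hx
            rw [hx, ← hwa]
            exact ⟨hwS, hwv⟩
          · rw [hR'no ⟨hvR, hdeg⟩]; exact hRd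
        · rw [hk'mem hvR]; omega
      · -- v ∉ R
        have hk : k' = k := hk'nmem hvR
        have hR'eq := hR'yes (Or.inl hvR)
        have hRd : R \ {v} ⊆ S \ {v} := fun x hx => ⟨hRS hx.1, hx.2⟩
        by_cases hNsub : G.neighborSet v ⊆ S
        · refine ⟨S \ {v}, hvnotd, ?_, hcov', hconnd, by omega⟩
          rw [hR'eq]
          refine Set.union_subset hRd (fun x hx => ⟨hNsub hx, ?_⟩)
          exact fun h => G.irrefl (show G.Adj v v from h ▸ hx)
        · obtain ⟨u, huN, huS⟩ := Set.not_subset.mp hNsub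
          have hNd : G.neighborSet v ⊆ insert u (S \ {v}) := by
            intro x hx
            rcases eq_or_ne x u with rfl | hxu
            · exact Set.mem_insert _ _
            · have hux : G.Adj u x := hsimp huN hx hxu.symm
              have hxS : x ∈ S := (hcov hux).resolve_left huS
              have hxv : x ≠ v := fun h => G.irrefl (show G.Adj v v from h ▸ hx)
              exact Set.mem_insert_of_mem _ ⟨hxS, hxv⟩
          have hwu : w ≠ u := fun h => huS (h ▸ hwS)
          have huw : G.Adj u w := hsimp huN (show w ∈ G.neighborSet v from hvw) hwu.symm
          refine ⟨insert u (S \ {v}), ?_, ?_, ?_, ?_, ?_⟩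
          · intro h
            rcases h with h | h
            · exact huS (h ▸ hvS)
            · exact h.2 rfl
          · rw [hR'eq]
            exact Set.union_subset
              (fun x hx => Set.mem_insert_of_mem _ (hRd hx)) hNd
          · intro a b hab ha hb
            exact (hcov' a b hab ha hb).imp
              (Set.mem_insert_of_mem _) (Set.mem_insert_of_mem _)
          · exact induce_insert_connected G hconnd (⟨hwS, hwv⟩ : w ∈ S \ {v}) huw
          · have := Set.ncard_insert_le u (S \ {v})
            omega
    · -- v ∉ S
      have hvR : v ∉ R := fun h => hvS (hRS h)
      have hNsub : G.neighborSet v ⊆ S := fun u hu =>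
        (hcov (show G.Adj v u from hu)).resolve_left hvS
      refine ⟨S, hvS, ?_, fun a b hab _ _ => hcov hab, hSconn, ?_⟩
      · rw [hR'yes (Or.inl hvR)]
        exact Set.union_subset (fun x hx => hRS hx.1) hNsub
      · rw [hk'nmem hvR]; exact hScard
  · rintro ⟨S, hvS, hR'S, hcov, hSconn, hScard⟩
    have hSne : S.Nonempty := Set.nonempty_coe_sort.mp hSconn.nonempty
    have hSpos : 0 < S.ncard := (Set.ncard_pos (Set.toFinite _)).mpr hSne
    have hRd : R \ {v} ⊆ R' := by
      by_cases hdeg : (G.neighborSet v).ncard = 1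
      · rw [hR'yes (Or.inr hdeg)]; exact Set.subset_union_left
      · by_cases hvR : v ∈ R
        · rw [hR'no ⟨hvR, hdeg⟩]
        · rw [hR'yes (Or.inl hvR)]; exact Set.subset_union_left
    by_cases hvR : v ∈ R
    · -- v ∈ R : use insert v S
      have hk : k' = k - 1 := hk'mem hvR
      -- find a neighbor of v in S
      have hnbr : ∃ u ∈ S, G.Adj v u := by
        by_cases hdeg : (G.neighborSet v).ncard = 1
        · obtain ⟨u, hu⟩ := hvadj
          refine ⟨u, ?_, hu⟩
          apply hR'S
          rw [hR'yes (Or.inr hdeg)]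
          exact Or.inr hu
        · have hpos : 0 < (G.neighborSet v).ncard := by
            obtain ⟨u, hu⟩ := hvadj
            exact (Set.ncard_pos (Set.toFinite _)).mpr ⟨u, hu⟩
          obtain ⟨a, b, haN, hbN, hab⟩ :=
            (Set.one_lt_ncard_iff (Set.toFinite (G.neighborSet v))).mp (by omega)
          have hadj : G.Adj a b := hsimp haN hbN hab
          have hav : a ≠ v := fun h => G.irrefl (show G.Adj v v from h ▸ haN)
          have hbv : b ≠ v := fun h => G.irrefl (show G.Adj v v from h ▸ hbN)
          rcases hcov a b hadj hav hbv with h | h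
          · exact ⟨a, h, haN⟩
          · exact ⟨b, h, hbN⟩
      obtain ⟨u, huS, hvu⟩ := hnbr
      refine ⟨insert v S, ⟨?_, ?_, ?_⟩, ?_⟩
      · intro x hx
        rcases eq_or_ne x v with rfl | hxv
        · exact Set.mem_insert _ _
        · exact Set.mem_insert_of_mem _ (hR'S (hRd ⟨hx, hxv⟩))
      · intro a b hab
        rcases eq_or_ne a v with rfl | ha
        · exact Or.inl (Set.mem_insert _ _)
        rcases eq_or_ne b v with rfl | hb
        · exact Or.inr (Set.mem_insert _ _)
        exact (hcov a b hab ha hb).imp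
          (Set.mem_insert_of_mem _) (Set.mem_insert_of_mem _)
      · exact induce_insert_connected G hSconn huS hvu
      · have := Set.ncard_insert_le v S
        omega
    · -- v ∉ R : use S
      have hk : k' = k := hk'nmem hvR
      have hR'eq := hR'yes (Or.inl hvR)
      have hNsub : G.neighborSet v ⊆ S := by
        intro x hx
        apply hR'S
        rw [hR'eq]
        exact Or.inr hx
      refine ⟨S, ⟨?_, ?_, hSconn⟩, by omega⟩
      · intro x hx
        have hxv : x ≠ v := fun h => hvR (h ▸ hx)
        exact hR'S (hRd ⟨hx, hxv⟩)
      · intro a b hab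
        rcases eq_or_ne a v with rfl | ha
        · exact Or.inr (hNsub hab)
        rcases eq_or_ne b v with rfl | hb
        · exact Or.inl (hNsub hab.symm)
        · exact hcov a b hab ha hb
end
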